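/- arXiv:1011.3779 — 9 statements merged into one kernel-verified Lean document; each statement's English description precedes it below -/
import Mathlib

section
/- Let n ≥ 1 and let A, B, A₁, B₁ be skew-symmetric n×n complex matrices. If the pencils (A,B) and (A₁,B₁) are strictly equivalent, i.e. there exist invertible complex n×n matrices P and Q (with constant entries) such that P A Q = A₁ and P B Q = B₁, then the pencils are congruent: there exists an invertible complex n×n matrix S such that S A Sᵀ = A₁ and S B Sᵀ = B₁. -/
/-!
Transposing `P M Q = M₁` for skew-symmetric `M`, `M₁` gives `Qᵀ M Pᵀ = M₁`, so `R = Qᵀ⁻¹ P`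
satisfies `R M = M Rᵀ` for both members of the pencil. An invertible complex matrix has a square
root `W` that is a polynomial in it: `X` is a square modulo its characteristic polynomial, by
Hensel lifting at each (nonzero) eigenvalue and the Chinese remainder theorem. Then `W M = M Wᵀ`,
hence `W M Wᵀ = W² M = R M`, and `S = Qᵀ W` satisfies `S M Sᵀ = P M Q = M₁`.
-/

open Matrix Polynomial

section SquareRootModulo

variable {R : Type*} [CommRing R] {f p q : R}

theorem dvd_sq_sub_of_dvd_sub {p' : R} (h : q ∣ p - p') (h' : q ∣ p' ^ 2 - f) :
    q ∣ p ^ 2 - f := by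
  have : p ^ 2 - f = (p - p') * (p + p') + (p' ^ 2 - f) := by ring
  exact this ▸ (dvd_mul_of_dvd_left h _).add h'

theorem exists_sq_sub_dvd_mul {q₁ q₂ : R} (hq : IsCoprime q₁ q₂)
    (h₁ : ∃ p, q₁ ∣ p ^ 2 - f) (h₂ : ∃ p, q₂ ∣ p ^ 2 - f) : ∃ p, q₁ * q₂ ∣ p ^ 2 - f := by
  obtain ⟨p₁, hp₁⟩ := h₁
  obtain ⟨p₂, hp₂⟩ := h₂
  obtain ⟨u, v, huv⟩ := hq
  refine ⟨p₁ * v * q₂ + p₂ * u * q₁, IsCoprime.mul_dvd ⟨u, v, huv⟩ ?_ ?_⟩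
  · refine dvd_sq_sub_of_dvd_sub ⟨u * (p₂ - p₁), ?_⟩ hp₁
    linear_combination p₁ * huv
  · refine dvd_sq_sub_of_dvd_sub ⟨v * (p₁ - p₂), ?_⟩ hp₂
    linear_combination p₂ * huv

theorem exists_sq_sub_dvd_pow_succ {e : ℕ} (he : e ≠ 0) (hf : IsCoprime (2 * f) q)
    (hp : q ^ e ∣ p ^ 2 - f) : ∃ p', q ^ (e + 1) ∣ p' ^ 2 - f := by
  obtain ⟨e, rfl⟩ := Nat.exists_eq_add_one_of_ne_zero he
  obtain ⟨r, hr⟩ := hp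
  have h2p : IsCoprime (2 * p) q := by
    have : 2 * p * p = 2 * f + q * (2 * q ^ e * r) := by linear_combination 2 * hr
    exact (this ▸ hf.add_mul_left_left (2 * q ^ e * r)).of_mul_left_left
  obtain ⟨u, v, huv⟩ := h2p
  -- Newton step: `u` inverts `2 p` modulo `q`.
  refine ⟨p - q ^ (e + 1) * u * r, r * v + q ^ e * u ^ 2 * r ^ 2, ?_⟩
  linear_combination hr - q ^ (e + 1) * r * huv

theorem exists_sq_sub_dvd_pow (hf : IsCoprime (2 * f) q) (h : ∃ p, q ∣ p ^ 2 - f) (e : ℕ) :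
    ∃ p, q ^ e ∣ p ^ 2 - f := by
  induction e with
  | zero => exact ⟨0, by simp⟩
  | succ e ih =>
    rcases eq_or_ne e 0 with rfl | he
    · simpa using h
    · obtain ⟨p, hp⟩ := ih
      exact exists_sq_sub_dvd_pow_succ he hf hp

end SquareRootModulo

section PolynomialSquareRoot

variable {K : Type*} [Field K] [IsAlgClosed K] [NeZero (2 : K)]

theorem exists_sq_sub_X_dvd_X_sub_C_pow {a : K} (ha : a ≠ 0) (e : ℕ) :
    ∃ p : K[X], (X - C a) ^ e ∣ p ^ 2 - X := by
  refine exists_sq_sub_dvd_pow ?_ ?_ e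
  · refine ((irreducible_X_sub_C a).coprime_iff_not_dvd.mpr ?_).symm
    rw [dvd_iff_isRoot]
    simpa [two_ne_zero] using ha
  · obtain ⟨b, hb⟩ := IsAlgClosed.exists_pow_nat_eq a two_pos
    exact ⟨C b, ⟨-1, by rw [← C_pow, hb]; ring⟩⟩

theorem exists_sq_sub_X_dvd_prod_X_sub_C_pow (s : Finset K) (hs : ∀ a ∈ s, a ≠ 0) (e : K → ℕ) :
    ∃ p : K[X], (∏ a ∈ s, (X - C a) ^ e a) ∣ p ^ 2 - X := by
  classical
  induction s using Finset.induction_on with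
  | empty => exact ⟨0, by simp⟩
  | insert a s ha ih =>
    rw [Finset.prod_insert ha]
    refine exists_sq_sub_dvd_mul ?_ (exists_sq_sub_X_dvd_X_sub_C_pow (hs a (by simp)) _)
      (ih fun b hb => hs b (by simp [hb]))
    refine IsCoprime.prod_right fun b hb => (isCoprime_X_sub_C_of_isUnit_sub ?_).pow
    exact (sub_ne_zero.mpr (ne_of_mem_of_not_mem hb ha).symm).isUnit

theorem exists_sq_sub_X_dvd {q : K[X]} (hq : ¬q.IsRoot 0) : ∃ p : K[X], q ∣ p ^ 2 - X := by
  classical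
  have hq0 : q ≠ 0 := by rintro rfl; exact hq (by simp)
  have hroots : ∀ a ∈ q.roots.toFinset, a ≠ 0 := by
    rintro a ha rfl
    exact hq (isRoot_of_mem_roots (Multiset.mem_toFinset.mp ha))
  obtain ⟨p, hp⟩ := exists_sq_sub_X_dvd_prod_X_sub_C_pow _ hroots (q.rootMultiplicity ·)
  have hfactor :=
    C_leadingCoeff_mul_prod_multiset_X_sub_C (IsAlgClosed.card_roots_eq_natDegree (p := q))
  rw [prod_multiset_root_eq_finset_root] at hfactor
  exact ⟨p, hfactor ▸ (C_mul_dvd (leadingCoeff_ne_zero.mpr hq0)).mpr hp⟩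

end PolynomialSquareRoot

theorem Polynomial.semiconjBy_aeval {R A : Type*} [CommSemiring R] [Semiring A] [Algebra R A]
    {a x y : A} (h : SemiconjBy a x y) (p : R[X]) : SemiconjBy a (aeval x p) (aeval y p) := by
  induction p using Polynomial.induction_on' with
  | add p q hp hq => simpa only [map_add] using hp.add_right hq
  | monomial k r =>
    simp only [aeval_monomial]
    exact (Algebra.commute_algebraMap_right r a).semiconjBy.mul_right (h.pow_right k)

namespace Matrix

variable {n α : Type*} [Fintype n]

theorem transpose_mul_mul_transpose_eq_of_transpose_eq_neg {m : Type*} [CommRing α]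
    {P : Matrix m n α} {A : Matrix n n α} {Q : Matrix n m α} {A₁ : Matrix m m α}
    (hA : Aᵀ = -A) (hA₁ : A₁ᵀ = -A₁) (h : P * A * Q = A₁) : Qᵀ * A * Pᵀ = A₁ := by
  simpa [hA, hA₁, Matrix.mul_assoc] using congrArg (fun X => -Xᵀ) h

variable [DecidableEq n]

theorem mul_eq_mul_transpose_of_transpose_mul_mul_eq [CommRing α] {Q M A A₁ : Matrix n n α}
    (hQ : IsUnit Q) (hA : Aᵀ = -A) (hA₁ : A₁ᵀ = -A₁) (h : Qᵀ * M * A * Q = A₁) :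
    M * A = A * Mᵀ := by
  have h' := transpose_mul_mul_transpose_eq_of_transpose_eq_neg hA hA₁ h
  rw [transpose_mul, transpose_transpose] at h'
  refine ((isUnit_transpose Q).mpr hQ).mul_left_cancel (hQ.mul_right_cancel ?_)
  calc Qᵀ * (M * A) * Q = A₁ := by simpa only [Matrix.mul_assoc] using h
    _ = Qᵀ * (A * Mᵀ) * Q := by simpa only [Matrix.mul_assoc] using h'.symm

theorem aeval_transpose [CommRing α] (M : Matrix n n α) (p : α[X]) :
    aeval Mᵀ p = (aeval M p)ᵀ := by
  simp [aeval_eq_sum_range, transpose_sum, transpose_smul, transpose_pow]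

theorem aeval_mul_eq_mul_transpose_aeval [CommRing α] {M A : Matrix n n α}
    (h : M * A = A * Mᵀ) (p : α[X]) : aeval M p * A = A * (aeval M p)ᵀ := by
  rw [← aeval_transpose]
  exact (semiconjBy_aeval h.symm p).symm

theorem exists_aeval_sq_eq_of_isUnit {K : Type*} [Field K] [IsAlgClosed K] [NeZero (2 : K)]
    {M : Matrix n n K} (hM : IsUnit M) : ∃ p : K[X], aeval M p ^ 2 = M := by
  have hroot : ¬M.charpoly.IsRoot 0 := by
    rw [IsRoot, ← coeff_zero_eq_eval_zero]
    intro h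
    have := det_eq_sign_charpoly_coeff M
    rw [h, mul_zero] at this
    exact ((isUnit_iff_isUnit_det M).mp hM).ne_zero this
  obtain ⟨p, r, hr⟩ := exists_sq_sub_X_dvd hroot
  refine ⟨p, sub_eq_zero.mp ?_⟩
  simpa [aeval_self_charpoly] using congrArg (aeval M) hr

end Matrix

theorem stmt_0_general (n : ℕ) (A B A₁ B₁ : Matrix (Fin n) (Fin n) ℂ)
    (hA : Aᵀ = -A) (hB : Bᵀ = -B) (hA₁ : A₁ᵀ = -A₁) (hB₁ : B₁ᵀ = -B₁)
    (P Q : Matrix (Fin n) (Fin n) ℂ) (hP : IsUnit P) (hQ : IsUnit Q)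
    (hPA : P * A * Q = A₁) (hPB : P * B * Q = B₁) :
    ∃ S : Matrix (Fin n) (Fin n) ℂ, IsUnit S ∧ S * A * Sᵀ = A₁ ∧ S * B * Sᵀ = B₁ := by
  have hQT : IsUnit Qᵀ := (isUnit_transpose Q).mpr hQ
  set R := Qᵀ⁻¹ * P
  have hP_eq : Qᵀ * R = P := mul_nonsing_inv_cancel_left Qᵀ P ((isUnit_iff_isUnit_det _).mp hQT)
  have hR : IsUnit R := (isUnit_nonsing_inv_iff.mpr hQT).mul hP
  obtain ⟨p, hp⟩ := exists_aeval_sq_eq_of_isUnit hR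
  set W := aeval R p
  have hW : IsUnit W := (isUnit_pow_iff two_ne_zero).mp (hp ▸ hR)
  have congruent {M M₁ : Matrix (Fin n) (Fin n) ℂ} (hM : Mᵀ = -M) (hM₁ : M₁ᵀ = -M₁)
      (h : P * M * Q = M₁) : Qᵀ * W * M * (Qᵀ * W)ᵀ = M₁ := by
    rw [← hP_eq] at h
    have hWM := aeval_mul_eq_mul_transpose_aeval
      (mul_eq_mul_transpose_of_transpose_mul_mul_eq hQ hM hM₁ h) p
    calc Qᵀ * W * M * (Qᵀ * W)ᵀ = Qᵀ * (W * (M * Wᵀ)) * Q := by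
          simp only [transpose_mul, transpose_transpose, Matrix.mul_assoc]
      _ = M₁ := by rw [← hWM, ← Matrix.mul_assoc W, ← sq, hp, ← Matrix.mul_assoc, h]
  exact ⟨Qᵀ * W, hQT.mul hW, congruent hA hA₁ hPA, congruent hB hB₁ hPB⟩

/-- Two strictly equivalent pencils of skew-symmetric complex
matrices are congruent. -/
theorem stmt_0 (n : ℕ) (hn : 1 ≤ n) (A B A₁ B₁ : Matrix (Fin n) (Fin n) ℂ)
    (hA : Aᵀ = -A) (hB : Bᵀ = -B) (hA₁ : A₁ᵀ = -A₁) (hB₁ : B₁ᵀ = -B₁)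
    (P Q : Matrix (Fin n) (Fin n) ℂ) (hP : IsUnit P) (hQ : IsUnit Q)
    (hPA : P * A * Q = A₁) (hPB : P * B * Q = B₁) :
    ∃ S : Matrix (Fin n) (Fin n) ℂ, IsUnit S ∧ S * A * Sᵀ = A₁ ∧ S * B * Sᵀ = B₁ :=
  stmt_0_general n A B A₁ B₁ hA hB hA₁ hB₁ P Q hP hQ hPA hPB
end

section
/- Let r ≥ 1 and let M be a 2-dimensional linear subspace of the space of skew-symmetric (N+1)×(N+1) complex matrices such that every nonzero matrix in M has rank 2r. Then M is a compression space: there exist linear subspaces V′ and W′ of ℂ^{N+1} such that A·v ∈ W′ for every A ∈ M and every v ∈ V′, and (N+1 − dim V′) + dim W′ = 2r. -/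
/-!
Take a basis `A, B` of `M`. Every `B + s • A` is a nonzero element of `M`, so the pencil
`s ↦ B + s • A` has constant rank `2r`. A vector `v` of the second Wong sequence `𝒲ₖ` of the
pencil satisfies `s ^ k • A v ∈ range (B + s • A)`, hence `A v ∈ range (B + s • A)` for all
`s ≠ 0`. If `A v ∉ range B`, then `B` extended by `A v` has rank `rank B + 1`; since the rank of
a linear family of maps drops only at finitely many points, `rank (B + s • A) > rank B` for some
`s ≠ 0`. So `A 𝒲ₖ ⊆ range B`, i.e. `A 𝒲ₖ ⊆ B 𝒲ₖ₊₁`, and `V' = ⋃ₖ 𝒲ₖ`, `W' = B V'` is a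
compression pair: as `ker B = 𝒲₁ ⊆ V'`, `dim V' - dim W' = dim ker B = N + 1 - 2r`.
-/

open Matrix Module

namespace LinearMap

variable {K U V W : Type*} [Field K] [AddCommGroup U] [Module K U] [AddCommGroup V]
  [Module K V] [AddCommGroup W] [Module K W]

theorem finite_setOf_not_injective_add_smul [FiniteDimensional K U] (L₀ L₁ : U →ₗ[K] W)
    (h₀ : Function.Injective L₀) : {s : K | ¬Function.Injective (L₀ + s • L₁)}.Finite := by
  -- For a left inverse `P` of `L₀`, a kernel vector of `L₀ + s • L₁` is an
  -- eigenvector of `P ∘ L₁` for the eigenvalue `-s⁻¹`.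
  obtain ⟨P, hP⟩ := L₀.exists_leftInverse_of_injective (ker_eq_bot.2 h₀)
  refine ((Module.End.finite_hasEigenvalue (P ∘ₗ L₁)).image fun μ => -μ⁻¹).subset
    fun s hs => ?_
  obtain ⟨v, hv, hv0⟩ : ∃ v ∈ ker (L₀ + s • L₁), v ≠ 0 :=
    Submodule.exists_mem_ne_zero_of_ne_bot (mt ker_eq_bot.1 hs)
  have hsv : s • P (L₁ v) = -v := by
    simpa [← comp_apply P L₀, hP, eq_neg_iff_add_eq_zero, add_comm] using congrArg P hv
  have hs0 : s ≠ 0 := by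
    rintro rfl
    exact hv0 (neg_eq_zero.1 (by simpa using hsv.symm))
  refine ⟨-s⁻¹, Module.End.hasEigenvalue_of_hasEigenvector ⟨?_, hv0⟩, by simp⟩
  rw [Module.End.mem_eigenspace_iff, comp_apply, ← inv_smul_smul₀ hs0 (P (L₁ v)), hsv,
    smul_neg, neg_smul]

theorem exists_ne_zero_finrank_range_le_add_smul [Infinite K] [FiniteDimensional K U]
    (L₀ L₁ : U →ₗ[K] W) :
    ∃ s : K, s ≠ 0 ∧ finrank K (range L₀) ≤ finrank K (range (L₀ + s • L₁)) := by
  obtain ⟨C, hC⟩ := (ker L₀).exists_isCompl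
  have hinj : Function.Injective (L₀ ∘ₗ C.subtype) := by
    rw [← ker_eq_bot, ker_comp, ← Submodule.disjoint_iff_comap_eq_bot]
    exact hC.disjoint.symm
  obtain ⟨s, hs⟩ := ((finite_setOf_not_injective_add_smul _ (L₁ ∘ₗ C.subtype) hinj).union
    (Set.finite_singleton 0)).infinite_compl.nonempty
  simp only [Set.mem_compl_iff, Set.mem_union, Set.mem_ofPred_eq, not_or, not_not,
    Set.mem_singleton_iff, ← smul_comp, ← add_comp] at hs
  refine ⟨s, hs.2, ?_⟩
  calc finrank K (range L₀) = finrank K C := by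
        have := finrank_range_add_finrank_ker L₀
        have := Submodule.finrank_add_eq_of_isCompl hC
        omega
    _ = finrank K (range ((L₀ + s • L₁) ∘ₗ C.subtype)) := (finrank_range_of_inj hs.1).symm
    _ ≤ finrank K (range (L₀ + s • L₁)) := Submodule.finrank_mono (range_comp_le_range _ _)

theorem finrank_map_add_finrank_ker_of_ker_le [FiniteDimensional K V] (f : V →ₗ[K] W)
    {p : Submodule K V} (h : ker f ≤ p) :
    finrank K (p.map f) + finrank K (ker f) = finrank K p := by
  have := finrank_range_add_finrank_ker (f.domRestrict p)
  rwa [range_domRestrict, ker_domRestrict,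
    (Submodule.comapSubtypeEquivOfLe h).finrank_eq] at this

/-- The second Wong sequence of the pencil `s ↦ B + s • A`. -/
def wongSeq (A B : V →ₗ[K] W) : ℕ → Submodule K V
  | 0 => ⊥
  | k + 1 => ((wongSeq A B k).map A).comap B

variable (A B : V →ₗ[K] W)

theorem wongSeq_one : wongSeq A B 1 = ker B := by
  show ((⊥ : Submodule K V).map A).comap B = ker B
  rw [Submodule.map_bot]
  rfl

theorem pow_smul_mem_range_add_smul {k : ℕ} {v : V} (hv : v ∈ wongSeq A B k) (s : K) :
    s ^ k • A v ∈ range (B + s • A) := by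
  induction k generalizing v with
  | zero => simp [(Submodule.mem_bot K).1 hv]
  | succ k ih =>
    obtain ⟨u, hu, hAu⟩ := hv
    have hBv : s ^ k • B v ∈ range (B + s • A) := hAu ▸ ih hu
    have : s ^ (k + 1) • A v = (B + s • A) (s ^ k • v) - s ^ k • B v := by
      simp only [add_apply, smul_apply, map_smul]
      module
    rw [this]
    exact sub_mem (mem_range_self _ _) hBv

theorem map_wongSeq_le_range_add_smul (k : ℕ) {s : K} (hs : s ≠ 0) :
    (wongSeq A B k).map A ≤ range (B + s • A) := by
  rintro _ ⟨v, hv, rfl⟩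
  simpa [inv_smul_smul₀ (pow_ne_zero k hs)] using
    Submodule.smul_mem _ (s ^ k)⁻¹ (pow_smul_mem_range_add_smul A B hv s)

theorem map_wongSeq_le_range [Infinite K] [FiniteDimensional K V]
    (hA : ∀ s : K, finrank K (range (B + s • A)) ≤ finrank K (range B)) (k : ℕ) :
    (wongSeq A B k).map A ≤ range B := by
  intro x hxk
  by_contra hx
  have hx0 : x ≠ 0 := by
    rintro rfl
    exact hx (zero_mem _)
  obtain ⟨s, hs, hrank⟩ := exists_ne_zero_finrank_range_le_add_smul
    (B.coprod (toSpanSingleton K W x)) (A.coprod 0)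
  have hrange₀ :
      finrank K (range (B.coprod (toSpanSingleton K W x))) = finrank K (range B) + 1 := by
    have hdisj : Disjoint (range B) (K ∙ x) := (Submodule.disjoint_span_singleton' hx0).2 hx
    rw [range_coprod, ← span_singleton_eq_range, ← finrank_span_singleton (K := K) hx0,
      ← Submodule.finrank_sup_add_finrank_inf_eq, hdisj.eq_bot, finrank_bot, add_zero]
  have hrange_s :
      range (B.coprod (toSpanSingleton K W x) + s • A.coprod 0) ≤ range (B + s • A) := by
    have : B.coprod (toSpanSingleton K W x) + s • A.coprod 0 =
        (B + s • A).coprod (toSpanSingleton K W x) := by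
      ext <;> simp
    rw [this, range_coprod, ← span_singleton_eq_range, sup_le_iff,
      Submodule.span_singleton_le_iff_mem]
    exact ⟨le_rfl, map_wongSeq_le_range_add_smul A B k hs hxk⟩
  have := Submodule.finrank_mono hrange_s
  have := hA s
  omega

theorem exists_compression_of_finrank_range_add_smul_le [Infinite K] [FiniteDimensional K V]
    (hA : ∀ s : K, finrank K (range (B + s • A)) ≤ finrank K (range B)) :
    ∃ V' : Submodule K V, V'.map A ≤ V'.map B ∧
      finrank K V - finrank K V' + finrank K (V'.map B) = finrank K (range B) := by
  refine ⟨⨆ k, wongSeq A B k, ?_, ?_⟩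
  · rw [Submodule.map_iSup, iSup_le_iff]
    rintro k _ ⟨v, hv, rfl⟩
    obtain ⟨w, hw⟩ := map_wongSeq_le_range A B hA k ⟨v, hv, rfl⟩
    exact ⟨w, Submodule.mem_iSup_of_mem (k + 1) ⟨v, hv, hw.symm⟩, hw⟩
  · have hker : ker B ≤ ⨆ k, wongSeq A B k := wongSeq_one A B ▸ le_iSup (wongSeq A B) 1
    have := finrank_map_add_finrank_ker_of_ker_le B hker
    have := finrank_range_add_finrank_ker B
    have := Submodule.finrank_le (⨆ k, wongSeq A B k)
    omega

end LinearMap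

theorem stmt_1_general (r N : ℕ)
    (M : Submodule ℂ (Matrix (Fin (N+1)) (Fin (N+1)) ℂ))
    (hdim : Module.finrank ℂ M = 2)
    (hrank : ∀ A ∈ M, A ≠ 0 → A.rank = 2*r) :
    ∃ (V' W' : Submodule ℂ (Fin (N+1) → ℂ)),
      (∀ A ∈ M, ∀ v ∈ V', A.mulVec v ∈ W') ∧
      (N + 1 - Module.finrank ℂ V') + Module.finrank ℂ W' = 2*r := by
  let b := Module.finBasisOfFinrankEq ℂ M hdim
  set A := (b 0 : Matrix (Fin (N+1)) (Fin (N+1)) ℂ)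
  set B := (b 1 : Matrix (Fin (N+1)) (Fin (N+1)) ℂ)
  have hpencil (s : ℂ) : (B + s • A).rank = 2 * r := by
    have hne : s • b 0 + b 1 ≠ 0 := fun h => one_ne_zero <|
      Fintype.linearIndependent_iff.1 b.linearIndependent ![s, 1]
        (by simpa [Fin.sum_univ_two] using h) 1
    have hcoe : ((s • b 0 + b 1 : M) : Matrix (Fin (N+1)) (Fin (N+1)) ℂ) = B + s • A :=
      add_comm _ _
    exact hcoe ▸ hrank _ (s • b 0 + b 1).2 (Submodule.coe_eq_zero.not.2 hne)
  have hB : B.rank = 2 * r := by simpa using hpencil 0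
  have hmulVecLin (s : ℂ) : (B + s • A).mulVecLin = B.mulVecLin + s • A.mulVecLin := by
    simp [← Matrix.toLin'_apply']
  obtain ⟨V', hAB, hfinrank⟩ :=
    LinearMap.exists_compression_of_finrank_range_add_smul_le A.mulVecLin B.mulVecLin
      fun s => by rw [← hmulVecLin, ← Matrix.rank, ← Matrix.rank, hpencil, hB]
  refine ⟨V', V'.map B.mulVecLin, fun C hC v hv => ?_, ?_⟩
  · have hCAB : C = b.repr ⟨C, hC⟩ 0 • A + b.repr ⟨C, hC⟩ 1 • B := by
      have := congrArg Subtype.val (b.sum_repr ⟨C, hC⟩)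
      rw [Fin.sum_univ_two, Submodule.coe_add, Submodule.coe_smul, Submodule.coe_smul] at this
      exact this.symm
    rw [hCAB, add_mulVec, smul_mulVec, smul_mulVec]
    exact add_mem (Submodule.smul_mem _ _ (hAB ⟨v, hv, rfl⟩))
      (Submodule.smul_mem _ _ ⟨v, hv, rfl⟩)
  · rwa [Module.finrank_fin_fun, ← Matrix.rank, hB] at hfinrank

/-- A 2-dimensional space of skew-symmetric complex matrices of
constant rank `2r` is a compression space. -/
theorem stmt_1 (r N : ℕ) (hr : 1 ≤ r)
    (M : Submodule ℂ (Matrix (Fin (N+1)) (Fin (N+1)) ℂ))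
    (hdim : Module.finrank ℂ M = 2)
    (hskew : ∀ A ∈ M, Aᵀ = -A)
    (hrank : ∀ A ∈ M, A ≠ 0 → A.rank = 2*r) :
    ∃ (V' W' : Submodule ℂ (Fin (N+1) → ℂ)),
      (∀ A ∈ M, ∀ v ∈ V', A.mulVec v ∈ W') ∧
      (N + 1 - Module.finrank ℂ V') + Module.finrank ℂ W' = 2*r :=
  stmt_1_general r N M hdim hrank
end

section
/- Let r ≥ 1 and let M be a nondegenerate 2-dimensional linear subspace of the space of skew-symmetric (N+1)×(N+1) complex matrices such that every nonzero matrix in M has rank 2r. Then 2r ≤ N ≤ 3r−1. -/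
/-!
Let `A, B` span the pencil and let `k = N + 1 - 2r` be the common dimension of the kernels.
Over `ℂ` some nonzero member `μA - B` of the pencil is singular (`μ` an eigenvalue of `A⁻¹B`),
so `2r < N + 1`. For the upper bound, constancy of the rank of `B + tA` forces `A` to vanish on
`ker B × ker B`; together with skew-symmetry this makes `W = ker A ⊕ ker B` (of dimension `2k`,
by nondegeneracy) isotropic for `A`. An isotropic subspace of a bilinear form on `ℂ^{N+1}` has
dimension at most `(N + 1 + dim (W ∩ radical)) / 2`, and here `W ∩ ker A = ker A`, so
`4k ≤ N + 1 + k`, i.e. `3k ≤ N + 1`.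
-/

open Matrix Module Filter Topology
open LinearMap (ker range)

theorem Submodule.exists_linearIndependent_pair_of_finrank_eq_two {K V : Type*} [Field K]
    [AddCommGroup V] [Module K V] {M : Submodule K V} (h : finrank K M = 2) :
    ∃ A B : V, LinearIndependent K ![A, B] ∧ M = span K {A, B} := by
  have : Module.Finite K M := Module.finite_of_finrank_eq_succ h
  let b := finBasisOfFinrankEq K M h
  have hb : ![(b 0 : V), b 1] = M.subtype ∘ b := by
    ext i; fin_cases i <;> rfl
  refine ⟨b 0, b 1, hb ▸ b.linearIndependent.map' M.subtype M.ker_subtype, ?_⟩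
  rw [← range_cons_cons_empty, hb, Set.range_comp, Submodule.span_image, b.span_eq,
    Submodule.map_subtype_top]

namespace Matrix

variable {n m l : Type*} [Fintype n] [Fintype m] [Fintype l]

section CommRing

variable {R : Type*} [CommRing R]

theorem dotProduct_mulVec_swap_of_transpose_eq_neg {A : Matrix n n R} (hA : Aᵀ = -A)
    (x y : n → R) : x ⬝ᵥ A *ᵥ y = -(y ⬝ᵥ A *ᵥ x) := by
  rw [dotProduct_mulVec, ← mulVec_transpose, hA, neg_mulVec, neg_dotProduct, dotProduct_comm]

theorem det_fromBlocks_smul_bottom [DecidableEq m] [DecidableEq l] (X : Matrix m m R)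
    (Y : Matrix m l R) (Z : Matrix l m R) (W : Matrix l l R) (t : R) :
    (fromBlocks X Y (t • Z) (t • W)).det = t ^ Fintype.card l * (fromBlocks X Y Z W).det := by
  have : fromBlocks X Y (t • Z) (t • W) = fromBlocks 1 0 0 (t • 1) * fromBlocks X Y Z W := by
    simp [fromBlocks_multiply]
  rw [this, det_mul, det_fromBlocks_zero₂₁, det_one, det_smul, det_one, mul_one, one_mul]

end CommRing

section Field

variable {K : Type*} [Field K]

theorem rank_add_finrank_ker_mulVecLin (A : Matrix n n K) :
    A.rank + finrank K (ker A.mulVecLin) = Fintype.card n := by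
  rw [rank, ← finrank_fintype_fun_eq_card K]
  exact A.mulVecLin.finrank_range_add_finrank_ker

theorem rank_lt_card_of_det_eq_zero [DecidableEq n] {A : Matrix n n K} (h : A.det = 0) :
    A.rank < Fintype.card n := by
  obtain ⟨x, hx0, hx⟩ := exists_mulVec_eq_zero_iff.mpr h
  have : 1 ≤ finrank K (ker A.mulVecLin) :=
    Submodule.one_le_finrank_iff.mpr ((Submodule.ne_bot_iff _).mpr ⟨x, hx, hx0⟩)
  have := rank_add_finrank_ker_mulVecLin A
  omega

theorem dotProduct_mulVec_self_of_transpose_eq_neg [CharZero K] {A : Matrix n n K}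
    (hA : Aᵀ = -A) (x : n → K) : x ⬝ᵥ A *ᵥ x = 0 := by
  have := dotProduct_mulVec_swap_of_transpose_eq_neg hA x x
  linear_combination this / 2

theorem rank_fromBlocks_transpose_mul_mul_le (C : Matrix n n K) (P : Matrix n m K)
    (V : Matrix n l K) :
    (fromBlocks (Pᵀ * C * P) (Pᵀ * C * V) (Vᵀ * C * P) (Vᵀ * C * V)).rank ≤ C.rank := by
  have : fromBlocks (Pᵀ * C * P) (Pᵀ * C * V) (Vᵀ * C * P) (Vᵀ * C * V) =
      (fromCols P V)ᵀ * (C * fromCols P V) := by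
    simp [transpose_fromCols, mul_fromCols, Matrix.mul_assoc]
  rw [this]
  exact (rank_mul_le_right _ _).trans (rank_mul_le_left _ _)

theorem exists_ker_mulVecLin_eq_bot_range_eq (W : Submodule K (n → K)) :
    ∃ P : Matrix n (Fin (finrank K W)) K, ker P.mulVecLin = ⊥ ∧ range P.mulVecLin = W := by
  classical
  set f := W.subtype ∘ₗ (finBasis K W).equivFun.symm.toLinearMap
  refine ⟨LinearMap.toMatrix' f, ?_, ?_⟩ <;> rw [← toLin'_apply', toLin'_toMatrix']
  · exact LinearMap.ker_eq_bot.mpr (W.injective_subtype.comp (LinearEquiv.injective _))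
  · rw [LinearMap.range_comp_of_range_eq_top _ (LinearEquiv.range _), Submodule.range_subtype]

theorem det_transpose_mul_mul_ne_zero [DecidableEq m] {A : Matrix n n K} (hA : Aᵀ = -A)
    {P : Matrix n m K} (hP : ker P.mulVecLin = ⊥)
    (hc : IsCompl (ker A.mulVecLin) (range P.mulVecLin)) : (Pᵀ * A * P).det ≠ 0 := by
  intro hdet
  obtain ⟨x, hx0, hx⟩ := exists_mulVec_eq_zero_iff.mpr hdet
  have hPt : Pᵀ *ᵥ (A *ᵥ (P *ᵥ x)) = 0 := by simpa [mulVec_mulVec, Matrix.mul_assoc] using hx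
  have hAPx : A *ᵥ (P *ᵥ x) = 0 := by
    refine dotProduct_eq_zero _ fun u => ?_
    obtain ⟨k, hk, _, ⟨y, rfl⟩, rfl⟩ :=
      Submodule.mem_sup.mp (hc.sup_eq_top ▸ Submodule.mem_top : u ∈ _)
    have hk' : k ⬝ᵥ A *ᵥ (P *ᵥ x) = 0 := by
      rw [dotProduct_mulVec_swap_of_transpose_eq_neg hA, show A *ᵥ k = 0 from hk,
        dotProduct_zero, neg_zero]
    rw [mulVecLin_apply, dotProduct_add, dotProduct_comm, hk', zero_add, dotProduct_mulVec,
      ← mulVec_transpose, hPt, zero_dotProduct]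
  have hPx : P *ᵥ x = 0 := hc.inf_eq_bot.le ⟨hAPx, x, rfl⟩
  exact hx0 (ker_mulVecLin_eq_bot_iff.mp hP x hPx)

theorem exists_ne_zero_det_fromBlocks_add_smul_ne_zero {𝕜 : Type*} [NontriviallyNormedField 𝕜]
    [DecidableEq m] [DecidableEq l] {X : Matrix m m 𝕜} (X' : Matrix m m 𝕜) (Y : Matrix m l 𝕜)
    (Z : Matrix l m 𝕜) {W : Matrix l l 𝕜} (hX : X.det ≠ 0) (hW : W.det ≠ 0) :
    ∃ t ≠ (0 : 𝕜), (fromBlocks (X + t • X') (t • Y) Z W).det ≠ 0 := by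
  have hcont : Continuous fun t : 𝕜 => (fromBlocks (X + t • X') (t • Y) Z W).det := by
    fun_prop
  have h0 : (fromBlocks (X + (0 : 𝕜) • X') ((0 : 𝕜) • Y) Z W).det ≠ 0 := by
    simpa [det_fromBlocks_zero₁₂] using mul_ne_zero hX hW
  obtain ⟨t, ht, ht0⟩ :=
    ((hcont.continuousAt.eventually_ne h0).filter_mono nhdsWithin_le_nhds |>.and
      (self_mem_nhdsWithin : {(0 : 𝕜)}ᶜ ∈ 𝓝[≠] 0)).exists
  exact ⟨t, ht0, ht⟩

theorem mul_transpose_of_eq_zero {ι : Type*} {A : Matrix n n K} {v : ι → n → K}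
    (hv : ∀ i, A *ᵥ v i = 0) : A * (of v)ᵀ = 0 := by
  ext i j
  simpa [mul_apply, mulVec, dotProduct] using congrFun (hv j) i

theorem det_mul_mul_transpose_of_transpose_eq_neg [CharZero K] {B : Matrix n n K} (hB : Bᵀ = -B)
    (v w : n → K) : (of ![v, w] * B * (of ![v, w])ᵀ).det = (w ⬝ᵥ B *ᵥ v) ^ 2 := by
  have hentry (a b : Fin 2) :
      (of ![v, w] * B * (of ![v, w])ᵀ) a b = ![v, w] a ⬝ᵥ B *ᵥ ![v, w] b := by
    rw [Matrix.mul_assoc]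
    simp only [mul_apply, dotProduct, mulVec, of_apply, transpose_apply]
  rw [det_fin_two, hentry, hentry, hentry, hentry]
  simp only [cons_val_zero, cons_val_one, cons_val_fin_one,
    dotProduct_mulVec_self_of_transpose_eq_neg hB,
    dotProduct_mulVec_swap_of_transpose_eq_neg hB v w]
  ring

/-- Otherwise compress `A + t • B` to `W ⊕ ⟨v, w⟩` with `W` a complement of `ker A`: the
determinant is `t ^ 2` times a continuous function of `t` whose value at `0` is
`det (A|W) * (w ⬝ᵥ B *ᵥ v) ^ 2 ≠ 0`, so for small `t ≠ 0` the rank of `A + t • B` is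
`rank A + 2`. -/
theorem dotProduct_mulVec_eq_zero_of_rank_add_smul_le {𝕜 : Type*} [NontriviallyNormedField 𝕜]
    [CharZero 𝕜] [DecidableEq n] {A B : Matrix n n 𝕜} (hA : Aᵀ = -A) (hB : Bᵀ = -B)
    (hrank : ∀ t : 𝕜, (A + t • B).rank ≤ A.rank) {v w : n → 𝕜} (hv : A *ᵥ v = 0)
    (hw : A *ᵥ w = 0) : w ⬝ᵥ B *ᵥ v = 0 := by
  by_contra hβ
  obtain ⟨W, hW⟩ := Submodule.exists_isCompl (ker A.mulVecLin)
  obtain ⟨P, hPinj, hPW⟩ := exists_ker_mulVecLin_eq_bot_range_eq W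
  set V : Matrix n (Fin 2) 𝕜 := (of ![v, w])ᵀ
  have hAV : A * V = 0 := mul_transpose_of_eq_zero (Fin.forall_fin_two.mpr ⟨hv, hw⟩)
  have hVA : Vᵀ * A = 0 := by
    rw [← transpose_transpose (Vᵀ * A), transpose_mul, hA, transpose_transpose, Matrix.neg_mul,
      hAV, neg_zero, transpose_zero]
  have hC : (Vᵀ * B * V).det ≠ 0 := by
    rw [transpose_transpose, det_mul_mul_transpose_of_transpose_eq_neg hB]
    exact pow_ne_zero 2 hβ
  obtain ⟨t, ht, hdet⟩ := exists_ne_zero_det_fromBlocks_add_smul_ne_zero (Pᵀ * B * P) (Pᵀ * B * V)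
    (Vᵀ * B * P) (det_transpose_mul_mul_ne_zero hA hPinj (hPW.symm ▸ hW)) hC
  have hblocks : fromBlocks (Pᵀ * (A + t • B) * P) (Pᵀ * (A + t • B) * V)
      (Vᵀ * (A + t • B) * P) (Vᵀ * (A + t • B) * V) =
      fromBlocks (Pᵀ * A * P + t • (Pᵀ * B * P)) (t • (Pᵀ * B * V))
        (t • (Vᵀ * B * P)) (t • (Vᵀ * B * V)) := by
    simp only [Matrix.mul_add, Matrix.add_mul, Matrix.mul_smul, Matrix.smul_mul, Matrix.mul_assoc,
      hAV, hVA, Matrix.mul_zero, zero_add]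
  have hle := rank_fromBlocks_transpose_mul_mul_le (A + t • B) P V
  rw [hblocks, rank_of_det_ne_zero (by
    rw [det_fromBlocks_smul_bottom]; exact mul_ne_zero (pow_ne_zero _ ht) hdet)] at hle
  have hfin := Submodule.finrank_add_eq_of_isCompl hW
  have := rank_add_finrank_ker_mulVecLin A
  have := hrank t
  simp only [Fintype.card_sum, Fintype.card_fin, finrank_fintype_fun_eq_card] at hle hfin
  omega

theorem dotProduct_mulVec_eq_zero_of_mem_sup_ker {A B : Matrix n n K} (hA : Aᵀ = -A)
    (hB : ∀ x ∈ ker B.mulVecLin, ∀ y ∈ ker B.mulVecLin, x ⬝ᵥ A *ᵥ y = 0) :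
    ∀ x ∈ ker A.mulVecLin ⊔ ker B.mulVecLin, ∀ y ∈ ker A.mulVecLin ⊔ ker B.mulVecLin,
      x ⬝ᵥ A *ᵥ y = 0 := by
  intro x hx y hy
  obtain ⟨xa, hxa, xb, hxb, rfl⟩ := Submodule.mem_sup.mp hx
  obtain ⟨ya, hya, yb, hyb, rfl⟩ := Submodule.mem_sup.mp hy
  have hxa' : A *ᵥ xa = 0 := hxa
  have hya' : A *ᵥ ya = 0 := hya
  rw [mulVec_add, hya', zero_add, add_dotProduct, dotProduct_mulVec_swap_of_transpose_eq_neg hA,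
    hxa', dotProduct_zero, neg_zero, zero_add, hB xb hxb yb hyb]

theorem two_mul_finrank_le_of_isotropic {A : Matrix n n K} (hA : Aᵀ = -A)
    {W : Submodule K (n → K)} (hW : ∀ x ∈ W, ∀ y ∈ W, x ⬝ᵥ A *ᵥ y = 0) :
    2 * finrank K W ≤ Fintype.card n + finrank K ↥(W ⊓ ker A.mulVecLin) := by
  classical
  have horth : W ≤ (toBilin' A).orthogonal W := fun y hy =>
    LinearMap.BilinForm.mem_orthogonal_iff.mpr fun x hx => by
      rw [toBilin'_apply']; exact hW x hx y hy
  have hker : LinearMap.ker (toBilin' A) ≤ ker A.mulVecLin := fun x hx => by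
    refine dotProduct_eq_zero _ fun y => ?_
    have := LinearMap.congr_fun (LinearMap.mem_ker.mp hx) y
    rw [toBilin'_apply', dotProduct_mulVec_swap_of_transpose_eq_neg hA] at this
    simpa [dotProduct_comm] using this
  have := LinearMap.BilinForm.finrank_add_finrank_orthogonal' (B := toBilin' A) W
  have := Submodule.finrank_mono horth
  have := Submodule.finrank_mono (inf_le_inf_left W hker)
  rw [finrank_fintype_fun_eq_card] at *
  omega

theorem three_mul_finrank_ker_le {A B : Matrix n n K} (hA : Aᵀ = -A)
    (hdisj : Disjoint (ker A.mulVecLin) (ker B.mulVecLin)) (hrank : B.rank = A.rank)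
    (hB : ∀ x ∈ ker B.mulVecLin, ∀ y ∈ ker B.mulVecLin, x ⬝ᵥ A *ᵥ y = 0) :
    3 * finrank K (ker A.mulVecLin) ≤ Fintype.card n := by
  have hiso :=
    two_mul_finrank_le_of_isotropic hA (dotProduct_mulVec_eq_zero_of_mem_sup_ker hA hB)
  rw [inf_of_le_right le_sup_left] at hiso
  have hsup := Submodule.finrank_sup_add_finrank_inf_eq (ker A.mulVecLin) (ker B.mulVecLin)
  rw [hdisj.eq_bot, finrank_bot] at hsup
  have := rank_add_finrank_ker_mulVecLin A
  have := rank_add_finrank_ker_mulVecLin B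
  omega

theorem exists_det_smul_add_smul_eq_zero [IsAlgClosed K] [Nonempty n] [DecidableEq n]
    (A B : Matrix n n K) : ∃ c d : K, (c ≠ 0 ∨ d ≠ 0) ∧ (c • A + d • B).det = 0 := by
  by_cases hA : A.det = 0
  · exact ⟨1, 0, by simp, by simpa using hA⟩
  obtain ⟨μ, hμ⟩ := Module.End.exists_eigenvalue (A⁻¹ * B).mulVecLin
  obtain ⟨x, hx⟩ := hμ.exists_hasEigenvector
  refine ⟨μ, -1, by simp, exists_mulVec_eq_zero_iff.mp ⟨x, hx.2, ?_⟩⟩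
  have hBx : B *ᵥ x = μ • A *ᵥ x := by
    rw [← mulVec_smul, ← hx.apply_eq_smul, mulVecLin_apply, mulVec_mulVec, ← Matrix.mul_assoc,
      mul_nonsing_inv A (isUnit_iff_ne_zero.mpr hA), Matrix.one_mul]
  rw [add_mulVec, smul_mulVec, smul_mulVec, hBx, neg_one_smul, add_neg_cancel]

end Field

end Matrix

theorem stmt_2_general (r N : ℕ)
    (M : Submodule ℂ (Matrix (Fin (N+1)) (Fin (N+1)) ℂ))
    (hdim : Module.finrank ℂ M = 2)
    (hskew : ∀ A ∈ M, Aᵀ = -A)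
    (hrank : ∀ A ∈ M, A ≠ 0 → A.rank = 2*r)
    (hker : (⨅ A ∈ M, LinearMap.ker (Matrix.mulVecLin A)) = ⊥) :
    2*r ≤ N ∧ N ≤ 3*r - 1 := by
  obtain ⟨A, B, hAB, rfl⟩ := Submodule.exists_linearIndependent_pair_of_finrank_eq_two hdim
  have hmem (c d : ℂ) : c • A + d • B ∈ Submodule.span ℂ {A, B} :=
    Submodule.mem_span_pair.mpr ⟨c, d, rfl⟩
  have hpencil (c d : ℂ) (hcd : c ≠ 0 ∨ d ≠ 0) : (c • A + d • B).rank = 2 * r :=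
    hrank _ (hmem c d) fun h => by simp_all [LinearIndependent.pair_iff.mp hAB c d h]
  have hrA : A.rank = 2 * r := by simpa using hpencil 1 0 (by simp)
  have hrB : B.rank = 2 * r := by simpa using hpencil 0 1 (by simp)
  have hA : Aᵀ = -A := by simpa using hskew _ (hmem 1 0)
  have hB : Bᵀ = -B := by simpa using hskew _ (hmem 0 1)
  have hdisj : Disjoint (ker A.mulVecLin) (ker B.mulVecLin) := by
    rw [disjoint_iff, eq_bot_iff, ← hker]
    rintro x ⟨hxA, hxB⟩
    simp only [Submodule.mem_iInf, Submodule.mem_span_pair]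
    rintro _ ⟨c, d, rfl⟩
    simp_all
  refine ⟨?_, ?_⟩
  · obtain ⟨c, d, hcd, hdet⟩ := exists_det_smul_add_smul_eq_zero A B
    have := rank_lt_card_of_det_eq_zero hdet
    rwa [hpencil c d hcd, Fintype.card_fin, Nat.lt_succ_iff] at this
  · have hBA (t : ℂ) : (B + t • A).rank ≤ B.rank := by
      rw [hrB, ← hpencil t 1 (by simp), one_smul, add_comm B]
    have h3k := three_mul_finrank_ker_le hA hdisj (hrB.trans hrA.symm)
      fun x hx y hy => dotProduct_mulVec_eq_zero_of_rank_add_smul_le hB hA hBA hy hx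
    have hk := rank_add_finrank_ker_mulVecLin A
    rw [Fintype.card_fin] at h3k hk
    omega

/-- For a nondegenerate 2-dimensional space of skew-symmetric
`(N+1)×(N+1)` complex matrices of constant rank `2r` one has `2r ≤ N ≤ 3r-1`. -/
theorem stmt_2 (r N : ℕ) (hr : 1 ≤ r)
    (M : Submodule ℂ (Matrix (Fin (N+1)) (Fin (N+1)) ℂ))
    (hdim : Module.finrank ℂ M = 2)
    (hskew : ∀ A ∈ M, Aᵀ = -A)
    (hrank : ∀ A ∈ M, A ≠ 0 → A.rank = 2*r)
    (hker : (⨅ A ∈ M, LinearMap.ker (Matrix.mulVecLin A)) = ⊥)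
    (hrange : (⨆ A ∈ M, LinearMap.range (Matrix.mulVecLin A)) = ⊤) :
    2*r ≤ N ∧ N ≤ 3*r - 1 :=
  stmt_2_general r N M hdim hskew hrank hker
end

section
/- Let r ≥ 1 and let r = r₁ + ⋯ + r_h be a partition of r with r₁ ≥ r₂ ≥ ⋯ ≥ r_h ≥ 1, and let F_λ(a,b) be the associated standard skew-symmetric pencil of size (2r+h)×(2r+h). Then for every (a,b) ∈ ℂ² with (a,b) ≠ (0,0) the matrix F_λ(a,b) has rank exactly 2r. Moreover the span of F_λ(1,0) and F_λ(0,1) is a 2-dimensional nondegenerate subspace of the skew-symmetric (2r+h)×(2r+h) complex matrices. -/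
open Matrix

open scoped Classical in
/-- Partial sums of the partition: `partialSum rpart k = r₁ + ⋯ + r_k`. -/
noncomputable def partialSum {h : ℕ} (rpart : Fin h → ℕ) (k : ℕ) : ℕ :=
  ∑ j ∈ Finset.range k, if hj : j < h then rpart ⟨j, hj⟩ else 0

open scoped Classical in
/-- The block-diagonal matrix `F̄(a,b)` with blocks `U_{r₁}(a,b), …, U_{r_h}(a,b)`,
where `U_{r_i}(a,b)` is the `r_i × (r_i+1)` matrix with `a` on the main diagonal and
`b` on the superdiagonal.  Row `s` lies in block `i` iff
`partialSum rpart i ≤ s < partialSum rpart (i+1)`, and then the entry in column `t`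
is `a` if `t = s + i`, `b` if `t = s + i + 1`, and `0` otherwise. -/
noncomputable def Fbar {h : ℕ} (rpart : Fin h → ℕ) (r m : ℕ) (a b : ℂ) :
    Matrix (Fin r) (Fin m) ℂ :=
  Matrix.of fun s t =>
    if ∃ i : Fin h, partialSum rpart i ≤ s.val ∧ s.val < partialSum rpart (i.val + 1) ∧
        t.val = s.val + i.val then a
    else if ∃ i : Fin h, partialSum rpart i ≤ s.val ∧ s.val < partialSum rpart (i.val + 1) ∧
        t.val = s.val + i.val + 1 then b
    else 0

/-- The standard skew-symmetric pencil `F_λ(a,b)` of size `(2r+h)×(2r+h)` associated to a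
partition `r = r₁ + ⋯ + r_h`, with block form `[[0, F̄(a,b)], [−F̄(a,b)ᵀ, 0]]`. -/
noncomputable def Fpencil {h : ℕ} (rpart : Fin h → ℕ) (r : ℕ) (a b : ℂ) :
    Matrix (Fin (2*r + h)) (Fin (2*r + h)) ℂ :=
  Matrix.reindex (finSumFinEquiv.trans (finCongr (by omega)))
    (finSumFinEquiv.trans (finCongr (by omega)))
    (Matrix.fromBlocks 0 (Fbar rpart r (r + h) a b) (-(Fbar rpart r (r + h) a b)ᵀ) 0)

/-!
Row `s` of `F̄(a,b)` lies in some block `i(s)` and carries `a` in column `c(s) = s + i(s)` and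
`b` in column `c(s) + 1`. The map `c` is strictly increasing, and since every block is
nonempty each column is `c(s)` or `c(s) + 1` for some row `s`. Hence `F̄(a,b)ᵀ` is injective
whenever `(a,b) ≠ (0,0)`: it is triangular with pivots `a` in the columns `c(s)`, or `b` in the
columns `c(s) + 1` when `a = 0`. So `F_λ(a,b)` has rank `2r`, and in particular
`F_λ(a,b) = a F_λ(1,0) + b F_λ(0,1)` never vanishes, which gives the dimension `2`.
A common kernel vector `(x, y)` of `F_λ(1,0)` and `F_λ(0,1)` has `x = 0` by injectivity of
`F̄(1,0)ᵀ`, and `y` vanishes on every `c(s)` and every `c(s) + 1`. For skew-symmetric matrices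
the ranges are orthogonal to the kernels, so the ranges span.
-/

open LinearMap

namespace Matrix

section Ring

variable {R : Type*} [Ring R] {m n : Type*}

theorem fromBlocks_skew_transpose (X : Matrix m n R) :
    (fromBlocks 0 X (-Xᵀ) 0)ᵀ = -fromBlocks 0 X (-Xᵀ) 0 := by
  simp [fromBlocks_transpose, fromBlocks_neg]

theorem fromBlocks_skew_smul_add_smul (a b : R) (X Y : Matrix m n R) :
    fromBlocks 0 (a • X + b • Y) (-(a • X + b • Y)ᵀ) 0 =
      a • fromBlocks 0 X (-Xᵀ) 0 + b • fromBlocks 0 Y (-Yᵀ) 0 := by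
  simp [fromBlocks_smul, fromBlocks_add, add_comm]

end Ring

section CommRing

variable {R : Type*} [CommRing R] {m n : Type*}

theorem mulVecLin_neg [Fintype n] (A : Matrix m n R) : (-A).mulVecLin = -A.mulVecLin :=
  LinearMap.ext fun _ => neg_mulVec _ _

theorem fromBlocks_zero_mulVec_eq_zero_iff [Fintype m] [Fintype n] (B : Matrix m n R)
    (C : Matrix n m R) (v : m ⊕ n → R) :
    fromBlocks 0 B C 0 *ᵥ v = 0 ↔ B *ᵥ (v ∘ Sum.inr) = 0 ∧ C *ᵥ (v ∘ Sum.inl) = 0 := by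
  simp [fromBlocks_mulVec, ← Sum.elim_zero_zero, Sum.elim_eq_iff]

def kerFromBlocksZeroEquiv [Fintype m] [Fintype n] (B : Matrix m n R) (C : Matrix n m R) :
    ker (fromBlocks 0 B C 0).mulVecLin ≃ₗ[R] ker C.mulVecLin × ker B.mulVecLin where
  toFun v := (⟨v.1 ∘ Sum.inl, ((fromBlocks_zero_mulVec_eq_zero_iff B C v.1).1 v.2).2⟩,
    ⟨v.1 ∘ Sum.inr, ((fromBlocks_zero_mulVec_eq_zero_iff B C v.1).1 v.2).1⟩)
  invFun p := ⟨Sum.elim p.1 p.2, (fromBlocks_zero_mulVec_eq_zero_iff B C _).2 ⟨p.2.2, p.1.2⟩⟩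
  map_add' _ _ := rfl
  map_smul' _ _ := rfl
  left_inv v := Subtype.ext (Sum.elim_comp_inl_inr v.1)
  right_inv _ := rfl

theorem ker_mulVecLin_reindex {l : Type*} [Fintype m] [Fintype l] (e : m ≃ l)
    (M : Matrix m m R) :
    ker (reindex e e M).mulVecLin =
      (ker M.mulVecLin).comap (LinearEquiv.funCongrLeft R R e).toLinearMap := by
  rw [mulVecLin_reindex, LinearEquiv.ker_comp, ker_comp]

theorem ker_fromBlocks_skew_inf_eq_bot [Fintype m] [Fintype n] (X Y : Matrix m n R)
    (hX : ker Xᵀ.mulVecLin = ⊥) (hXY : ker X.mulVecLin ⊓ ker Y.mulVecLin = ⊥) :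
    ker (fromBlocks 0 X (-Xᵀ) 0).mulVecLin ⊓ ker (fromBlocks 0 Y (-Yᵀ) 0).mulVecLin = ⊥ := by
  refine (Submodule.eq_bot_iff _).2 fun v hv => ?_
  simp only [Submodule.mem_inf, mem_ker, mulVecLin_apply,
    fromBlocks_zero_mulVec_eq_zero_iff, neg_mulVec, neg_eq_zero] at hv
  obtain ⟨⟨hXr, hXl⟩, hYr, -⟩ := hv
  have hl : v ∘ Sum.inl = 0 := ker_mulVecLin_eq_bot_iff.1 hX _ hXl
  have hr : v ∘ Sum.inr = 0 := (Submodule.eq_bot_iff _).1 hXY _ ⟨hXr, hYr⟩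
  rw [← Sum.elim_comp_inl_inr v, hl, hr, Sum.elim_zero_zero]

theorem ker_transpose_mulVecLin_eq_bot_of_pivot [NoZeroDivisors R] {ι : Type*} [Fintype ι]
    [LinearOrder ι] [WellFoundedLT ι] (M : Matrix ι n R) (p : ι → n)
    (hp : ∀ i, M i (p i) ≠ 0) (hlt : ∀ i j, i < j → M j (p i) = 0) :
    ker Mᵀ.mulVecLin = ⊥ := by
  refine ker_mulVecLin_eq_bot_iff.2 fun x hx => funext fun i => ?_
  induction i using WellFoundedLT.induction with
  | _ i ih =>
    have hi := congrFun hx (p i)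
    rw [mulVec, dotProduct, Finset.sum_eq_single i] at hi
    · exact (mul_eq_zero.1 hi).resolve_left (hp i)
    · intro j _ hji
      rcases lt_or_gt_of_ne hji with hj | hj
      · simp [ih j hj]
      · simp [hlt i j hj]
    · simp

end CommRing

section Field

variable {K : Type*} [Field K] {m n : Type*} [Fintype m] [Fintype n]

theorem rank_fromBlocks_zero_zero (B : Matrix m n K) (C : Matrix n m K) :
    (fromBlocks 0 B C 0).rank = B.rank + C.rank := by
  have hM := finrank_range_add_finrank_ker (fromBlocks 0 B C 0).mulVecLin
  have hB := finrank_range_add_finrank_ker B.mulVecLin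
  have hC := finrank_range_add_finrank_ker C.mulVecLin
  rw [(kerFromBlocksZeroEquiv B C).finrank_eq, Module.finrank_prod] at hM
  simp only [Module.finrank_fintype_fun_eq_card, Fintype.card_sum] at hM hB hC
  simp only [rank]
  omega

theorem rank_fromBlocks_skew (X : Matrix m n K) (hX : ker Xᵀ.mulVecLin = ⊥) :
    (fromBlocks 0 X (-Xᵀ) 0).rank = 2 * Fintype.card m := by
  have hXt : Xᵀ.rank = Fintype.card m := by
    rw [rank, finrank_range_of_inj (ker_eq_bot.mp hX), Module.finrank_fintype_fun_eq_card]
  have hXnt : (-Xᵀ).rank = Xᵀ.rank := by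
    rw [rank, rank, mulVecLin_neg, range_neg]
  rw [rank_fromBlocks_zero_zero, hXnt, ← rank_transpose X, hXt]
  ring

/-- A linear form `f` vanishing on all ranges yields the vector `(f eᵢ)ᵢ`, killed by every `Aᵀ`. -/
theorem iSup_range_mulVecLin_eq_top_of_iInf_ker_transpose [DecidableEq n]
    (S : Set (Matrix n n K)) (hS : ⨅ A ∈ S, ker Aᵀ.mulVecLin = ⊥) :
    ⨆ A ∈ S, range A.mulVecLin = ⊤ := by
  by_contra hne
  obtain ⟨f, hf0, hle⟩ := Submodule.exists_le_ker_of_lt_top _ (lt_top_iff_ne_top.2 hne)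
  set u : n → K := fun i => f (Pi.single i 1)
  have hu : u ∈ ⨅ A ∈ S, ker Aᵀ.mulVecLin := by
    simp only [Submodule.mem_iInf, mem_ker, mulVecLin_apply]
    intro A hA
    ext j
    have hcol : A *ᵥ Pi.single j 1 ∈ ker f :=
      hle (Submodule.mem_iSup_of_mem A (Submodule.mem_iSup_of_mem hA (mem_range_self _ _)))
    rw [mem_ker, pi_eq_sum_univ' (A *ᵥ Pi.single j 1)] at hcol
    simpa [mulVec_single_one, mulVec_transpose, vecMul, dotProduct, u, mul_comm] using hcol
  rw [hS, Submodule.mem_bot] at hu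
  exact hf0 (LinearMap.pi_ext fun i c => by
    rw [← mul_one c, ← smul_eq_mul, Pi.single_smul', map_smul, smul_eq_mul,
      LinearMap.zero_apply, mul_eq_zero]
    exact Or.inr (congrFun hu i))

end Field

end Matrix

theorem Nat.exists_le_lt_succ_of_le_of_lt {f : ℕ → ℕ} {s : ℕ} :
    ∀ {n : ℕ}, f 0 ≤ s → s < f n → ∃ i < n, f i ≤ s ∧ s < f (i + 1)
  | 0, h0, hn => absurd hn (not_lt.2 h0)
  | n + 1, h0, hn => by
    by_cases hs : s < f n
    · obtain ⟨i, hi, hfi⟩ := Nat.exists_le_lt_succ_of_le_of_lt h0 hs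
      exact ⟨i, by omega, hfi⟩
    · exact ⟨n, by omega, not_lt.1 hs, hn⟩

section Partition

variable {h : ℕ} (rpart : Fin h → ℕ)

theorem partialSum_zero : partialSum rpart 0 = 0 := by simp [partialSum]

theorem partialSum_succ {k : ℕ} (hk : k < h) :
    partialSum rpart (k + 1) = partialSum rpart k + rpart ⟨k, hk⟩ := by
  simp [partialSum, Finset.sum_range_succ, hk]

theorem partialSum_monotone : Monotone (partialSum rpart) :=
  monotone_nat_of_le_succ fun k => by
    simp only [partialSum, Finset.sum_range_succ]
    exact Nat.le_add_right _ _

theorem partialSum_self : partialSum rpart h = ∑ i, rpart i := by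
  simp [partialSum, ← Fin.sum_univ_eq_sum_range]

noncomputable def blockIndex (s : ℕ) : ℕ := Nat.findGreatest (fun i => partialSum rpart i ≤ s) h

/-- Column of the entry `a` in row `s` of `Fbar`. -/
noncomputable def diagCol (s : ℕ) : ℕ := s + blockIndex rpart s

variable {rpart}

theorem blockIndex_eq {s i : ℕ} (hi : i < h) (h1 : partialSum rpart i ≤ s)
    (h2 : s < partialSum rpart (i + 1)) : blockIndex rpart s = i :=
  Nat.findGreatest_eq_iff.2 ⟨hi.le, fun _ => h1, fun _ hj _ hle =>
    not_le.2 (h2.trans_le (partialSum_monotone rpart hj)) hle⟩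

theorem blockIndex_spec {s : ℕ} (hs : s < partialSum rpart h) :
    blockIndex rpart s < h ∧ partialSum rpart (blockIndex rpart s) ≤ s ∧
      s < partialSum rpart (blockIndex rpart s + 1) := by
  obtain ⟨i, hi, h1, h2⟩ :=
    Nat.exists_le_lt_succ_of_le_of_lt (f := partialSum rpart) (by simp [partialSum_zero]) hs
  rw [blockIndex_eq hi h1 h2]
  exact ⟨hi, h1, h2⟩

theorem diagCol_strictMono : StrictMono (diagCol rpart) := fun _ _ hst =>
  Nat.add_lt_add_of_lt_of_le hst (Nat.findGreatest_mono_left (fun _ hi => hi.trans hst.le) h)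

theorem exists_diagCol_eq (hpos : ∀ i, 1 ≤ rpart i) {t : ℕ} (ht : t < partialSum rpart h + h) :
    ∃ s < partialSum rpart h, t = diagCol rpart s ∨ t = diagCol rpart s + 1 := by
  obtain ⟨i, hi, h1, h2⟩ := Nat.exists_le_lt_succ_of_le_of_lt
    (f := fun k => partialSum rpart k + k) (by simp [partialSum_zero]) ht
  have hsucc := partialSum_succ rpart hi
  have hpi := hpos ⟨i, hi⟩
  have hle := partialSum_monotone rpart (show i + 1 ≤ h from hi)
  by_cases hlast : t < partialSum rpart (i + 1) + i
  · refine ⟨t - i, by omega, Or.inl ?_⟩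
    rw [diagCol, blockIndex_eq hi (by omega) (by omega)]
    omega
  · refine ⟨partialSum rpart (i + 1) - 1, by omega, Or.inr ?_⟩
    rw [diagCol, blockIndex_eq hi (by omega) (by omega)]
    omega

end Partition

section Fbar

variable {h r : ℕ} {rpart : Fin h → ℕ}

theorem exists_block_iff {s : ℕ} (hs : s < partialSum rpart h) (P : ℕ → Prop) :
    (∃ i : Fin h, partialSum rpart i ≤ s ∧ s < partialSum rpart (i + 1) ∧ P i) ↔
      P (blockIndex rpart s) := by
  obtain ⟨hlt, h1, h2⟩ := blockIndex_spec hs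
  exact ⟨fun ⟨i, hi1, hi2, hP⟩ => blockIndex_eq i.isLt hi1 hi2 ▸ hP,
    fun hP => ⟨⟨_, hlt⟩, h1, h2, hP⟩⟩

theorem Fbar_apply (hr : partialSum rpart h = r) {m : ℕ} (a b : ℂ) (s : Fin r) (t : Fin m) :
    Fbar rpart r m a b s t =
      if (t : ℕ) = diagCol rpart s then a else if (t : ℕ) = diagCol rpart s + 1 then b else 0 := by
  have hs : (s : ℕ) < partialSum rpart h := hr ▸ s.isLt
  simp only [Fbar, of_apply, exists_block_iff hs (fun i => (t : ℕ) = s + i),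
    exists_block_iff hs (fun i => (t : ℕ) = s + i + 1), diagCol]
  congr

theorem diagCol_add_one_lt (hr : partialSum rpart h = r) (s : Fin r) :
    diagCol rpart s + 1 < r + h := by
  have := (blockIndex_spec (hr ▸ s.isLt : (s : ℕ) < partialSum rpart h)).1
  unfold diagCol
  omega

theorem Fbar_mulVec_apply (hr : partialSum rpart h = r) (a b : ℂ) (y : Fin (r + h) → ℂ)
    {s : Fin r} {t t' : Fin (r + h)} (ht : (t : ℕ) = diagCol rpart s)
    (ht' : (t' : ℕ) = diagCol rpart s + 1) :
    (Fbar rpart r (r + h) a b *ᵥ y) s = a * y t + b * y t' := by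
  have htt' : t ≠ t' := by rw [Ne, ← Fin.val_inj]; omega
  have hentry (x : Fin (r + h)) :
      Fbar rpart r (r + h) a b s x = (if x = t then a else 0) + (if x = t' then b else 0) := by
    rw [Fbar_apply hr, ← ht', ← ht]
    simp only [Fin.val_inj]
    split_ifs <;> simp_all
  simp [mulVec, dotProduct, hentry, add_mul, Finset.sum_add_distrib]

variable (rpart) in
theorem Fbar_eq_smul_add_smul (m : ℕ) (a b : ℂ) :
    Fbar rpart r m a b = a • Fbar rpart r m 1 0 + b • Fbar rpart r m 0 1 := by
  ext s t
  simp only [Fbar, of_apply, Matrix.smul_apply, Matrix.add_apply, smul_eq_mul]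
  split_ifs <;> simp

theorem ker_Fbar_transpose_eq_bot (hr : partialSum rpart h = r) {a b : ℂ}
    (hab : (a, b) ≠ (0, 0)) : ker (Fbar rpart r (r + h) a b)ᵀ.mulVecLin = ⊥ := by
  have hlt := diagCol_add_one_lt hr
  have hmono : StrictMono (diagCol rpart) := diagCol_strictMono
  by_cases ha : a = 0
  · have hb : b ≠ 0 := by rintro rfl; exact hab (by rw [ha])
    refine ker_transpose_mulVecLin_eq_bot_of_pivot _ (fun s => ⟨diagCol rpart s + 1, hlt s⟩)
      (fun s => by simpa [Fbar_apply hr] using hb) (fun s s' hss' => ?_)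
    have := hmono hss'
    simp [Fbar_apply hr, ha, this.ne]
  · refine ker_transpose_mulVecLin_eq_bot_of_pivot _
      (fun s => ⟨diagCol rpart s, by have := hlt s; omega⟩)
      (fun s => by simpa [Fbar_apply hr] using ha) (fun s s' hss' => ?_)
    have := hmono hss'
    simp [Fbar_apply hr, this.ne, show diagCol rpart s ≠ diagCol rpart s' + 1 by omega]

theorem ker_Fbar_inf_eq_bot (hr : partialSum rpart h = r) (hpos : ∀ i, 1 ≤ rpart i) :
    ker (Fbar rpart r (r + h) 1 0).mulVecLin ⊓ ker (Fbar rpart r (r + h) 0 1).mulVecLin = ⊥ := by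
  refine (Submodule.eq_bot_iff _).2 fun y ⟨hy₁, hy₂⟩ => funext fun t => ?_
  obtain ⟨s, hs, ht | ht⟩ := exists_diagCol_eq hpos (t := t) (hr ▸ t.isLt)
  · have hy := congrFun (mem_ker.1 hy₁) ⟨s, hr ▸ hs⟩
    rwa [mulVecLin_apply, Fbar_mulVec_apply hr 1 0 y ht
      (t' := ⟨_, diagCol_add_one_lt hr ⟨s, hr ▸ hs⟩⟩) rfl, one_mul, zero_mul, add_zero] at hy
  · have hy := congrFun (mem_ker.1 hy₂) ⟨s, hr ▸ hs⟩
    rwa [mulVecLin_apply, Fbar_mulVec_apply hr 0 1 y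
      (t := ⟨diagCol rpart s, by have := t.isLt; omega⟩) rfl ht, zero_mul, one_mul, zero_add] at hy

end Fbar

section Fpencil

variable {h r : ℕ} {rpart : Fin h → ℕ}

variable (rpart r) in
theorem Fpencil_eq_smul_add_smul (a b : ℂ) :
    Fpencil rpart r a b = a • Fpencil rpart r 1 0 + b • Fpencil rpart r 0 1 := by
  rw [Fpencil, Fbar_eq_smul_add_smul rpart (r + h) a b, fromBlocks_skew_smul_add_smul]
  rfl

theorem Fpencil_transpose (a b : ℂ) : (Fpencil rpart r a b)ᵀ = -Fpencil rpart r a b := by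
  rw [Fpencil, transpose_reindex, fromBlocks_skew_transpose]
  rfl

theorem rank_Fpencil (hr : partialSum rpart h = r) {a b : ℂ} (hab : (a, b) ≠ (0, 0)) :
    (Fpencil rpart r a b).rank = 2 * r := by
  rw [Fpencil, rank_reindex, rank_fromBlocks_skew _ (ker_Fbar_transpose_eq_bot hr hab),
    Fintype.card_fin]

theorem ker_Fpencil_inf_eq_bot (hr : partialSum rpart h = r) (hpos : ∀ i, 1 ≤ rpart i) :
    ker (Fpencil rpart r 1 0).mulVecLin ⊓ ker (Fpencil rpart r 0 1).mulVecLin = ⊥ := by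
  rw [Fpencil, Fpencil, ker_mulVecLin_reindex, ker_mulVecLin_reindex, ← Submodule.comap_inf,
    ker_fromBlocks_skew_inf_eq_bot _ _ (ker_Fbar_transpose_eq_bot hr (by simp))
      (ker_Fbar_inf_eq_bot hr hpos), Submodule.comap_bot, LinearEquiv.ker]

theorem linearIndependent_Fpencil (hr : partialSum rpart h = r) (hr0 : 0 < r) :
    LinearIndependent ℂ ![Fpencil rpart r 1 0, Fpencil rpart r 0 1] := by
  refine LinearIndependent.pair_iff.2 fun a b hab => ?_
  rw [← Fpencil_eq_smul_add_smul] at hab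
  by_contra hne
  have hrank := rank_Fpencil hr (a := a) (b := b) (by simpa using hne)
  rw [hab, Matrix.rank_zero] at hrank
  omega

theorem finrank_span_Fpencil (hr : partialSum rpart h = r) (hr0 : 0 < r) :
    Module.finrank ℂ (Submodule.span ℂ ({Fpencil rpart r 1 0, Fpencil rpart r 0 1} :
      Set (Matrix (Fin (2 * r + h)) (Fin (2 * r + h)) ℂ))) = 2 := by
  rw [← Matrix.range_cons_cons_empty _ _ ![],
    finrank_span_eq_card (linearIndependent_Fpencil hr hr0), Fintype.card_fin]

end Fpencil

theorem stmt_3_general (r h : ℕ) (hr : 1 ≤ r)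
    (rpart : Fin h → ℕ) (hpos : ∀ i, 1 ≤ rpart i)
    (hsum : ∑ i, rpart i = r) :
    (∀ a b : ℂ, (a, b) ≠ (0, 0) → (Fpencil rpart r a b).rank = 2*r) ∧
    Module.finrank ℂ (Submodule.span ℂ
      ({Fpencil rpart r 1 0, Fpencil rpart r 0 1} :
        Set (Matrix (Fin (2*r + h)) (Fin (2*r + h)) ℂ))) = 2 ∧
    (∀ A ∈ Submodule.span ℂ
      ({Fpencil rpart r 1 0, Fpencil rpart r 0 1} :
        Set (Matrix (Fin (2*r + h)) (Fin (2*r + h)) ℂ)), Aᵀ = -A) ∧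
    (⨅ A ∈ Submodule.span ℂ
      ({Fpencil rpart r 1 0, Fpencil rpart r 0 1} :
        Set (Matrix (Fin (2*r + h)) (Fin (2*r + h)) ℂ)),
      LinearMap.ker (Matrix.mulVecLin A)) = ⊥ ∧
    (⨆ A ∈ Submodule.span ℂ
      ({Fpencil rpart r 1 0, Fpencil rpart r 0 1} :
        Set (Matrix (Fin (2*r + h)) (Fin (2*r + h)) ℂ)),
      LinearMap.range (Matrix.mulVecLin A)) = ⊤ := by
  have hpart : partialSum rpart h = r := (partialSum_self rpart).trans hsum
  set S := Submodule.span ℂ ({Fpencil rpart r 1 0, Fpencil rpart r 0 1} :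
    Set (Matrix (Fin (2*r + h)) (Fin (2*r + h)) ℂ))
  have hskew : ∀ A ∈ S, Aᵀ = -A := by
    intro A hA
    obtain ⟨a, b, rfl⟩ := Submodule.mem_span_pair.1 hA
    rw [← Fpencil_eq_smul_add_smul, Fpencil_transpose]
  have hker : ⨅ A ∈ S, ker A.mulVecLin = ⊥ := eq_bot_iff.2 <|
    (le_inf (iInf₂_le _ (Submodule.subset_span (by simp)))
      (iInf₂_le _ (Submodule.subset_span (by simp)))).trans
      (ker_Fpencil_inf_eq_bot hpart hpos).le
  refine ⟨fun a b hab => rank_Fpencil hpart hab, finrank_span_Fpencil hpart hr, hskew, hker,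
    iSup_range_mulVecLin_eq_top_of_iInf_ker_transpose _ (hker ▸ ?_)⟩
  refine iInf_congr fun A => iInf_congr fun hA => ?_
  rw [hskew A hA, mulVecLin_neg, ker_neg]

/-- For every partition `r = r₁ + ⋯ + r_h` the standard pencil
`F_λ(a,b)` has rank exactly `2r` for all `(a,b) ≠ (0,0)`, and the span of
`F_λ(1,0)` and `F_λ(0,1)` is a 2-dimensional nondegenerate subspace of the
skew-symmetric `(2r+h)×(2r+h)` complex matrices. -/
theorem stmt_3 (r h : ℕ) (hr : 1 ≤ r) (hh : 1 ≤ h)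
    (rpart : Fin h → ℕ) (hpos : ∀ i, 1 ≤ rpart i)
    (hmono : ∀ i j : Fin h, i ≤ j → rpart j ≤ rpart i)
    (hsum : ∑ i, rpart i = r) :
    (∀ a b : ℂ, (a, b) ≠ (0, 0) → (Fpencil rpart r a b).rank = 2*r) ∧
    Module.finrank ℂ (Submodule.span ℂ
      ({Fpencil rpart r 1 0, Fpencil rpart r 0 1} :
        Set (Matrix (Fin (2*r + h)) (Fin (2*r + h)) ℂ))) = 2 ∧
    (∀ A ∈ Submodule.span ℂ
      ({Fpencil rpart r 1 0, Fpencil rpart r 0 1} :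
        Set (Matrix (Fin (2*r + h)) (Fin (2*r + h)) ℂ)), Aᵀ = -A) ∧
    (⨅ A ∈ Submodule.span ℂ
      ({Fpencil rpart r 1 0, Fpencil rpart r 0 1} :
        Set (Matrix (Fin (2*r + h)) (Fin (2*r + h)) ℂ)),
      LinearMap.ker (Matrix.mulVecLin A)) = ⊥ ∧
    (⨆ A ∈ Submodule.span ℂ
      ({Fpencil rpart r 1 0, Fpencil rpart r 0 1} :
        Set (Matrix (Fin (2*r + h)) (Fin (2*r + h)) ℂ)),
      LinearMap.range (Matrix.mulVecLin A)) = ⊤ :=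
  stmt_3_general r h hr rpart hpos hsum
end

section
/- Let n ≥ 2, let 1 ≤ k ≤ n−1, and let Ω be a 2×k matrix whose entries are linear forms on ℂ^{n+1} (elements of the dual space of ℂ^{n+1}). Assume Ω is 1-generic and that the entries of Ω span the dual space of ℂ^{n+1}. Then there exist an invertible 2×2 complex matrix P, an invertible k×k complex matrix Q, a basis z₀, …, z_n of the dual space of ℂ^{n+1}, and a strictly increasing map c : {0, …, k−1} → {0, …, n−1} with c(0) = 0, c(k−1) = n−1 and c(j+1) − c(j) ∈ {1, 2} for all j, such that (PΩQ)_{0,j} = z_{c(j)} and (PΩQ)_{1,j} = z_{c(j)+1} for every j; that is, PΩQ consists of consecutive catalecticant blocks whose entries are consecutive coordinates z_i, together covering all of z₀, …, z_n. -/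
open Matrix

/-- Conjugation of a `2 × k` matrix `Ω` of linear forms by constant invertible matrices:
`(P Ω Q) i j = ∑ s t, P i s * Q t j • Ω s t`. -/
noncomputable def matConj {k n : ℕ} (P : Matrix (Fin 2) (Fin 2) ℂ)
    (Ω : Matrix (Fin 2) (Fin k) (Module.Dual ℂ (Fin (n+1) → ℂ)))
    (Q : Matrix (Fin k) (Fin k) ℂ) :
    Matrix (Fin 2) (Fin k) (Module.Dual ℂ (Fin (n+1) → ℂ)) :=
  Matrix.of fun i j => ∑ s, ∑ t, (P i s * Q t j) • Ω s t

/-!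
Let `f, g : ℂⁿ⁺¹ → ℂᵏ` be the maps whose coordinates are the two rows of `Ω`. One-genericity says
that every member `a • f + b • g` of the pencil is surjective, and the spanning hypothesis says
that `ker f ⊓ ker g = ⊥`. Over an algebraically closed field such a pencil is a direct sum of
Kronecker blocks `L_ε`, `ε ≥ 1`: bases `x₀, …, x_ε` and `u₀, …, u_{ε-1}` with `f xᵢ = uᵢ`,
`g xᵢ₊₁ = uᵢ` and `f x_ε = g x₀ = 0`. In the dual bases this is the catalecticant shape.

A block is split off along a nonzero chain `g x₀ = 0`, `f xₜ = g xₜ₊₁` of minimal length `ε`.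
Chains exist because `dim ℂᵏ < dim ℂⁿ⁺¹`: for equal dimensions an eigenvector of `g⁻¹ ∘ f` would
lie in the kernel of some bijective `f - μ • g`. Minimality makes `x₀, …, x_ε` and
`f x₀, …, f x_{ε-1}` independent, so the pencil is block triangular with `L_ε` as a diagonal
block. The other diagonal block has no chains shorter than `ε` either; dually, this solves the
linear equations that remove the off-diagonal part. What remains is a smaller pencil with the
same hypotheses.
-/

namespace Pencil

open Module LinearMap Function

variable {𝕜 V W V' W' : Type*} [Field 𝕜]
  [AddCommGroup V] [Module 𝕜 V] [AddCommGroup W] [Module 𝕜 W]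
  [AddCommGroup V'] [Module 𝕜 V'] [AddCommGroup W'] [Module 𝕜 W']

def MembersSurjective (f g : V →ₗ[𝕜] W) : Prop :=
  ∀ a b : 𝕜, (a, b) ≠ 0 → Surjective (a • f + b • g)

def StrictlyEquivalent (f g : V →ₗ[𝕜] W) (f' g' : V' →ₗ[𝕜] W') : Prop :=
  ∃ (e : V ≃ₗ[𝕜] V') (e' : W ≃ₗ[𝕜] W'),
    e'.toLinearMap ∘ₗ f = f' ∘ₗ e ∧ e'.toLinearMap ∘ₗ g = g' ∘ₗ e

variable {f g : V →ₗ[𝕜] W}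

namespace StrictlyEquivalent

variable {V₁ W₁ : Type*} [AddCommGroup V₁] [Module 𝕜 V₁] [AddCommGroup W₁] [Module 𝕜 W₁]
  {f' g' : V' →ₗ[𝕜] W'}

lemma trans {f₁ g₁ : V₁ →ₗ[𝕜] W₁} (h : StrictlyEquivalent f g f' g')
    (h' : StrictlyEquivalent f' g' f₁ g₁) : StrictlyEquivalent f g f₁ g₁ := by
  obtain ⟨e, e', hf, hg⟩ := h
  obtain ⟨d, d', hf', hg'⟩ := h'
  refine ⟨e ≪≫ₗ d, e' ≪≫ₗ d', ?_, ?_⟩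
  · rw [LinearEquiv.coe_trans, LinearEquiv.coe_trans, LinearMap.comp_assoc, hf,
      ← LinearMap.comp_assoc, hf', LinearMap.comp_assoc]
  · rw [LinearEquiv.coe_trans, LinearEquiv.coe_trans, LinearMap.comp_assoc, hg,
      ← LinearMap.comp_assoc, hg', LinearMap.comp_assoc]

lemma prodMap {f₁ g₁ : V₁ →ₗ[𝕜] W₁} (h : StrictlyEquivalent f g f' g') :
    StrictlyEquivalent (f.prodMap f₁) (g.prodMap g₁) (f'.prodMap f₁) (g'.prodMap g₁) := by
  obtain ⟨e, e', hf, hg⟩ := h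
  refine ⟨e.prodCongr (LinearEquiv.refl 𝕜 V₁), e'.prodCongr (LinearEquiv.refl 𝕜 W₁), ?_, ?_⟩ <;>
    ext x <;> simp [← LinearMap.comp_apply, hf, hg]

lemma membersSurjective (h : StrictlyEquivalent f g f' g') (hs : MembersSurjective f g) :
    MembersSurjective f' g' := by
  obtain ⟨e, e', hf, hg⟩ := h
  intro a b hab y
  obtain ⟨x, hx⟩ := hs a b hab (e'.symm y)
  refine ⟨e x, ?_⟩
  have hf' := LinearMap.congr_fun hf x
  have hg' := LinearMap.congr_fun hg x
  simp only [LinearMap.comp_apply, LinearEquiv.coe_coe] at hf' hg'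
  simp only [LinearMap.add_apply, LinearMap.smul_apply] at hx ⊢
  rw [← hf', ← hg', ← LinearEquiv.map_smul, ← LinearEquiv.map_smul, ← map_add, hx,
    LinearEquiv.apply_symm_apply]

lemma disjoint_ker (h : StrictlyEquivalent f g f' g') (hd : Disjoint (ker f) (ker g)) :
    Disjoint (ker f') (ker g') := by
  obtain ⟨e, e', hf, hg⟩ := h
  refine Submodule.disjoint_def.mpr fun x hx hx' => ?_
  have hf' := LinearMap.congr_fun hf (e.symm x)
  have hg' := LinearMap.congr_fun hg (e.symm x)
  simp only [LinearMap.comp_apply, LinearEquiv.coe_coe, LinearEquiv.apply_symm_apply] at hf' hg'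
  rw [LinearMap.mem_ker] at hx hx'
  rw [hx, LinearEquiv.map_eq_zero_iff] at hf'
  rw [hx', LinearEquiv.map_eq_zero_iff] at hg'
  simpa using (Submodule.disjoint_def.mp hd) _ hf' hg'

end StrictlyEquivalent

section Prod

variable {V₁ W₁ V₂ W₂ : Type*} [AddCommGroup V₁] [Module 𝕜 V₁] [AddCommGroup W₁] [Module 𝕜 W₁]
  [AddCommGroup V₂] [Module 𝕜 V₂] [AddCommGroup W₂] [Module 𝕜 W₂]
  {f₁ g₁ : V₁ →ₗ[𝕜] W₁} {f₂ g₂ : V₂ →ₗ[𝕜] W₂}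

lemma MembersSurjective.of_prodMap (h : MembersSurjective (f₁.prodMap f₂) (g₁.prodMap g₂)) :
    MembersSurjective f₁ g₁ := by
  intro a b hab y
  obtain ⟨x, hx⟩ := h a b hab (y, 0)
  exact ⟨x.1, by simpa using congrArg Prod.fst hx⟩

lemma disjoint_ker_of_prodMap (h : Disjoint (ker (f₁.prodMap f₂)) (ker (g₁.prodMap g₂))) :
    Disjoint (ker f₁) (ker g₁) := by
  refine Submodule.disjoint_def.mpr fun x hf hg => ?_
  have := (Submodule.disjoint_def.mp h) (x, 0) (by simpa using hf) (by simpa using hg)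
  exact congrArg Prod.fst this

end Prod

def extendByZero {m : ℕ} (x : Fin m → V) (t : ℕ) : V :=
  if h : t < m then x ⟨t, h⟩ else 0

@[simp] lemma extendByZero_add {m : ℕ} (x y : Fin m → V) (t : ℕ) :
    extendByZero (x + y) t = extendByZero x t + extendByZero y t := by
  unfold extendByZero; split_ifs <;> simp

@[simp] lemma extendByZero_smul {m : ℕ} (a : 𝕜) (x : Fin m → V) (t : ℕ) :
    extendByZero (a • x) t = a • extendByZero x t := by
  unfold extendByZero; split_ifs <;> simp

@[simp] lemma extendByZero_coe {m : ℕ} (x : Fin m → V) (i : Fin m) : extendByZero x i = x i := by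
  simp [extendByZero]

lemma extendByZero_of_le {m t : ℕ} (x : Fin m → V) (h : m ≤ t) : extendByZero x t = 0 := by
  simp [extendByZero, not_lt.mpr h]

def IsChain (f g : V →ₗ[𝕜] W) (v : ℕ → V) : Prop :=
  g (v 0) = 0 ∧ ∀ t, f (v t) = g (v (t + 1))

/-- The chain operator
`(x₀, …, x_{m-1}) ↦ (g x₀, g x₁ - f x₀, …, g x_{m-1} - f x_{m-2}, - f x_{m-1})`. -/
def chainMap (f g : V →ₗ[𝕜] W) (m : ℕ) : (Fin m → V) →ₗ[𝕜] Fin (m + 1) → W where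
  toFun x := Matrix.vecCons (g (extendByZero x 0)) fun s => g (extendByZero x (s + 1)) - f (x s)
  map_add' x y := by
    ext i; refine Fin.cases ?_ (fun s => ?_) i <;> simp; abel
  map_smul' a x := by
    ext i; refine Fin.cases ?_ (fun s => ?_) i <;> simp [smul_sub]

@[simp] lemma chainMap_apply_zero {m : ℕ} (x : Fin m → V) :
    chainMap f g m x 0 = g (extendByZero x 0) := rfl

@[simp] lemma chainMap_apply_succ {m : ℕ} (x : Fin m → V) (s : Fin m) :
    chainMap f g m x s.succ = g (extendByZero x (s + 1)) - f (x s) := by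
  simp [chainMap]

lemma chainMap_eq_zero_iff {m : ℕ} (x : Fin m → V) :
    chainMap f g m x = 0 ↔ IsChain f g (extendByZero x) := by
  constructor
  · intro h
    refine ⟨by simpa using congr_fun h 0, fun t => ?_⟩
    by_cases ht : t < m
    · have h' := congr_fun h (Fin.succ ⟨t, ht⟩)
      rw [chainMap_apply_succ, Pi.zero_apply, sub_eq_zero] at h'
      simpa [extendByZero, ht] using h'.symm
    · have ht' := not_lt.mp ht
      simp [extendByZero_of_le x ht', extendByZero_of_le x (Nat.le_succ_of_le ht')]
  · rintro ⟨h0, h⟩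
    ext i
    refine Fin.cases (by simpa using h0) (fun s => ?_) i
    rw [chainMap_apply_succ, Pi.zero_apply, sub_eq_zero, ← extendByZero_coe x s]
    exact (h s).symm

lemma injective_chainMap_iff {m : ℕ} :
    Injective (chainMap f g m) ↔ ∀ v, IsChain f g v → (∀ t, m ≤ t → v t = 0) → v = 0 := by
  constructor
  · intro h v hv hsupp
    have hext : extendByZero (fun i : Fin m => v i) = v := by
      ext t
      by_cases ht : t < m
      · simp [extendByZero, ht]
      · simp [extendByZero, ht, hsupp t (not_lt.mp ht)]
    have hx : (fun i : Fin m => v i) = 0 :=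
      (injective_iff_map_eq_zero _).mp h _ ((chainMap_eq_zero_iff _).mpr (by rwa [hext]))
    rw [← hext, hx]
    ext t
    simp [extendByZero]
  · intro h
    refine (injective_iff_map_eq_zero _).mpr fun x hx => ?_
    have := h _ ((chainMap_eq_zero_iff x).mp hx) fun t ht => extendByZero_of_le x ht
    ext i
    simpa using congr_fun this i

lemma injective_chainMap_of_succ {m : ℕ} (h : Injective (chainMap f g (m + 1))) :
    Injective (chainMap f g m) :=
  injective_chainMap_iff.mpr fun v hv hsupp =>
    injective_chainMap_iff.mp h v hv fun t ht => hsupp t (by omega)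

lemma injective_chainMap_zero : Injective (chainMap f g 0) :=
  fun _ _ _ => Subsingleton.elim _ _

lemma injective_chainMap_one (h : Disjoint (ker f) (ker g)) : Injective (chainMap f g 1) := by
  refine (injective_iff_map_eq_zero _).mpr fun x hx => ?_
  have hg : g (x 0) = 0 := by simpa [extendByZero] using congr_fun hx 0
  have hf : f (x 0) = 0 := by
    have h1 := congr_fun hx (Fin.succ 0)
    rw [chainMap_apply_succ] at h1
    simpa [extendByZero] using h1
  ext i
  rw [Subsingleton.elim i 0]
  exact (Submodule.disjoint_def.mp h) _ hf hg

lemma chainMap_single {m : ℕ} (t : Fin m) (x : V) :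
    chainMap f g m (Pi.single t x) = Pi.single t.castSucc (g x) - Pi.single t.succ (f x) := by
  have hext : ∀ n : ℕ, extendByZero (Pi.single t x) n = if n = t then x else 0 := by
    intro n
    unfold extendByZero
    split_ifs with h h' h' <;> simp_all [Fin.ext_iff]
  ext i
  refine Fin.cases ?_ (fun s => ?_) i
  · simp [hext, Pi.single_apply, Fin.ext_iff, eq_comm, apply_ite g]
  · simp only [chainMap_apply_succ, hext, Pi.sub_apply, Pi.single_apply, Fin.ext_iff,
      Fin.val_succ, Fin.val_castSucc]
    split_ifs <;> simp_all

lemma chainMap_comp_compLeft {f' g' : V' →ₗ[𝕜] W'} (a : V →ₗ[𝕜] V') (b : W →ₗ[𝕜] W')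
    (hf : b ∘ₗ f = f' ∘ₗ a) (hg : b ∘ₗ g = g' ∘ₗ a) (m : ℕ) :
    chainMap f' g' m ∘ₗ a.compLeft (Fin m) = b.compLeft (Fin (m + 1)) ∘ₗ chainMap f g m := by
  have hext : ∀ (x : Fin m → V) t,
      extendByZero (a.compLeft (Fin m) x) t = a (extendByZero x t) := by
    intro x t; unfold extendByZero; split_ifs <;> simp
  have hf' := LinearMap.congr_fun hf
  have hg' := LinearMap.congr_fun hg
  simp only [LinearMap.comp_apply] at hf' hg'
  refine LinearMap.ext fun x => funext fun i => Fin.cases ?_ (fun s => ?_) i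
  · simp [hext, hg']
  · simp [hext, hf', hg']

lemma injective_chainMap_of_injective {f' g' : V' →ₗ[𝕜] W'} {a : V →ₗ[𝕜] V'} (b : W →ₗ[𝕜] W')
    (ha : Injective a) (hf : b ∘ₗ f = f' ∘ₗ a) (hg : b ∘ₗ g = g' ∘ₗ a) {m : ℕ}
    (h : Injective (chainMap f' g' m)) : Injective (chainMap f g m) := by
  have hcomp := congrArg DFunLike.coe (chainMap_comp_compLeft a b hf hg m)
  have : Injective (chainMap f' g' m ∘ₗ a.compLeft (Fin m)) :=
    h.comp fun x y hxy => funext fun i => ha (congr_fun hxy i)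
  rw [hcomp, LinearMap.coe_comp] at this
  exact this.of_comp

lemma StrictlyEquivalent.injective_chainMap {f' g' : V' →ₗ[𝕜] W'}
    (h : StrictlyEquivalent f g f' g') {m : ℕ}
    (hc : Injective (chainMap f g m)) : Injective (chainMap f' g' m) := by
  obtain ⟨e, e', hf, hg⟩ := h
  refine injective_chainMap_of_injective e'.symm.toLinearMap e.symm.injective ?_ ?_ hc <;>
    ext x
  · simpa using (e'.symm_apply_eq.mpr (LinearMap.congr_fun hf (e.symm x)).symm)
  · simpa using (e'.symm_apply_eq.mpr (LinearMap.congr_fun hg (e.symm x)).symm)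

/-- Under these conditions the pencil `(funLeft s, funLeft t)` is a direct sum of Kronecker blocks,
one for each maximal run of consecutive values of `s`. -/
structure IsBlockShape {M N : ℕ} (s t : Fin M → Fin N) : Prop where
  val_succ : ∀ j, (t j : ℕ) = s j + 1
  strictMono : StrictMono s
  cover : ∀ i, ∃ j, s j = i ∨ t j = i

lemma isBlockShape_castSucc_succ (m : ℕ) :
    IsBlockShape (Fin.castSucc : Fin (m + 1) → Fin (m + 2)) Fin.succ where
  val_succ _ := rfl
  strictMono := Fin.strictMono_castSucc
  cover i := Fin.lastCases ⟨Fin.last m, Or.inr rfl⟩ (fun j => ⟨j, Or.inl rfl⟩) i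

lemma strictMono_finAppend {α : Type*} [Preorder α] {m n : ℕ} {a : Fin m → α} {b : Fin n → α}
    (ha : StrictMono a) (hb : StrictMono b) (hab : ∀ i j, a i < b j) :
    StrictMono (Fin.append a b) := by
  intro j j' h
  induction j using Fin.addCases with
  | left i =>
    induction j' using Fin.addCases with
    | left i' => simpa using ha ((Fin.strictMono_castAdd n).lt_iff_lt.mp h)
    | right i' => simpa using hab i i'
  | right i =>
    induction j' using Fin.addCases with
    | left i' => simp [Fin.lt_def] at h; omega
    | right i' => simpa using hb ((Fin.natAdd_lt_natAdd_iff m).mp h)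

lemma IsBlockShape.append {M₁ N₁ M₂ N₂ : ℕ} {s₁ t₁ : Fin M₁ → Fin N₁} {s₂ t₂ : Fin M₂ → Fin N₂}
    (h₁ : IsBlockShape s₁ t₁) (h₂ : IsBlockShape s₂ t₂) :
    IsBlockShape (Fin.append (Fin.castAdd N₂ ∘ s₁) (Fin.natAdd N₁ ∘ s₂))
      (Fin.append (Fin.castAdd N₂ ∘ t₁) (Fin.natAdd N₁ ∘ t₂)) where
  val_succ j := by
    refine Fin.addCases (fun j => ?_) (fun j => ?_) j <;>
      simp [h₁.val_succ, h₂.val_succ, Nat.add_assoc]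
  strictMono := strictMono_finAppend ((Fin.strictMono_castAdd _).comp h₁.strictMono)
    ((Fin.strictMono_natAdd _).comp h₂.strictMono) fun i j => by
      simp only [Function.comp_apply, Fin.lt_def, Fin.val_castAdd, Fin.val_natAdd]
      omega
  cover i := by
    induction i using Fin.addCases with
    | left i =>
      obtain ⟨j, hj⟩ := h₁.cover i
      exact ⟨Fin.castAdd M₂ j, by simpa using hj⟩
    | right i =>
      obtain ⟨j, hj⟩ := h₂.cover i
      exact ⟨Fin.natAdd M₁ j, by simpa using hj⟩

namespace IsBlockShape

variable {M N : ℕ} {s t : Fin M → Fin N}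

lemma val_zero (h : IsBlockShape s t) (hM : 0 < M) : (s ⟨0, hM⟩ : ℕ) = 0 := by
  obtain ⟨j, hj⟩ := h.cover ⟨0, by have := h.val_succ ⟨0, hM⟩; omega⟩
  have h1 := Fin.le_def.mp (h.strictMono.monotone (Fin.le_def.mpr (Nat.zero_le j) :
    (⟨0, hM⟩ : Fin M) ≤ j))
  have h2 := h.val_succ j
  rcases hj with hj | hj <;> have := congrArg Fin.val hj <;> simp only at this <;> omega

lemma val_last {n : ℕ} {s t : Fin M → Fin (n + 1)} (h : IsBlockShape s t) (hM : 0 < M) :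
    (s ⟨M - 1, Nat.sub_lt hM Nat.one_pos⟩ : ℕ) = n - 1 := by
  set l : Fin M := ⟨M - 1, Nat.sub_lt hM Nat.one_pos⟩
  obtain ⟨j, hj⟩ := h.cover (Fin.last n)
  have h1 := Fin.le_def.mp (h.strictMono.monotone
    (Fin.le_def.mpr (Nat.le_sub_one_of_lt j.isLt) : j ≤ l))
  have h2 := h.val_succ j
  have h3 := h.val_succ l
  have h4 := (t l).isLt
  have h5 := (t j).isLt
  rcases hj with hj | hj <;> have := congrArg Fin.val hj <;> simp only [Fin.val_last] at this <;>
    omega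

lemma val_succ_sub (h : IsBlockShape s t) (j : ℕ) (hj : j + 1 < M) :
    (s ⟨j + 1, hj⟩ : ℕ) - s ⟨j, Nat.lt_of_succ_lt hj⟩ = 1 ∨
      (s ⟨j + 1, hj⟩ : ℕ) - s ⟨j, Nat.lt_of_succ_lt hj⟩ = 2 := by
  set a : Fin M := ⟨j, Nat.lt_of_succ_lt hj⟩
  set b : Fin M := ⟨j + 1, hj⟩
  have hab := Fin.lt_def.mp (h.strictMono (Fin.lt_def.mpr (Nat.lt_succ_self j) : a < b))
  have hb := (s b).isLt
  by_contra! hgap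
  obtain ⟨j', hj'⟩ := h.cover ⟨s a + 2, by omega⟩
  have hval : (s a : ℕ) < s j' ∧ (s j' : ℕ) < s b := by
    have := h.val_succ j'
    rcases hj' with hj' | hj' <;> have := congrArg Fin.val hj' <;> simp only at this <;> omega
  have h1 := Fin.lt_def.mp (h.strictMono.lt_iff_lt.mp (Fin.lt_def.mpr hval.1))
  have h2 := Fin.lt_def.mp (h.strictMono.lt_iff_lt.mp (Fin.lt_def.mpr hval.2))
  simp only [a, b] at h1 h2
  omega

end IsBlockShape

def finAppendLinearEquiv (N₁ N₂ : ℕ) :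
    ((Fin N₁ → 𝕜) × (Fin N₂ → 𝕜)) ≃ₗ[𝕜] (Fin (N₁ + N₂) → 𝕜) where
  __ := Fin.appendEquiv N₁ N₂
  map_add' x y := funext fun i => by
    induction i using Fin.addCases <;> simp
  map_smul' a x := funext fun i => by
    induction i using Fin.addCases <;> simp

lemma strictlyEquivalent_prodMap_funLeft {M₁ N₁ M₂ N₂ : ℕ} (s₁ t₁ : Fin M₁ → Fin N₁)
    (s₂ t₂ : Fin M₂ → Fin N₂) :
    StrictlyEquivalent ((funLeft 𝕜 𝕜 s₁).prodMap (funLeft 𝕜 𝕜 s₂))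
      ((funLeft 𝕜 𝕜 t₁).prodMap (funLeft 𝕜 𝕜 t₂))
      (funLeft 𝕜 𝕜 (Fin.append (Fin.castAdd N₂ ∘ s₁) (Fin.natAdd N₁ ∘ s₂)))
      (funLeft 𝕜 𝕜 (Fin.append (Fin.castAdd N₂ ∘ t₁) (Fin.natAdd N₁ ∘ t₂))) := by
  refine ⟨finAppendLinearEquiv N₁ N₂, finAppendLinearEquiv M₁ M₂, ?_, ?_⟩ <;>
    refine LinearMap.ext fun x => funext fun j => ?_ <;>
    induction j using Fin.addCases <;> simp [finAppendLinearEquiv]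

section Triangular

variable {V₂ W₂ B C : Type*} [AddCommGroup V₂] [Module 𝕜 V₂] [AddCommGroup W₂] [Module 𝕜 W₂]
  [AddCommGroup B] [Module 𝕜 B] [AddCommGroup C] [Module 𝕜 C]

def blockTriangular (f₂ : V₂ →ₗ[𝕜] W₂) (F : V₂ →ₗ[𝕜] C) (σ : B →ₗ[𝕜] C) :
    V₂ × B →ₗ[𝕜] W₂ × C :=
  (f₂ ∘ₗ LinearMap.fst 𝕜 V₂ B).prod (F.coprod σ)

@[simp] lemma blockTriangular_apply (f₂ : V₂ →ₗ[𝕜] W₂) (F : V₂ →ₗ[𝕜] C) (σ : B →ₗ[𝕜] C)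
    (x : V₂ × B) : blockTriangular f₂ F σ x = (f₂ x.1, F x.1 + σ x.2) := rfl

lemma eq_blockTriangular {h : V₂ × B →ₗ[𝕜] W₂ × C} {σ : B →ₗ[𝕜] C}
    (hr : h ∘ₗ LinearMap.inr 𝕜 V₂ B = LinearMap.inr 𝕜 W₂ C ∘ₗ σ) :
    h = blockTriangular (LinearMap.fst 𝕜 W₂ C ∘ₗ h ∘ₗ LinearMap.inl 𝕜 V₂ B)
      (LinearMap.snd 𝕜 W₂ C ∘ₗ h ∘ₗ LinearMap.inl 𝕜 V₂ B) σ := by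
  ext x <;> simp [hr, Prod.mk_zero_zero]

variable {f₂ g₂ : V₂ →ₗ[𝕜] W₂} {F G : V₂ →ₗ[𝕜] C} {σ τ : B →ₗ[𝕜] C}

lemma strictlyEquivalent_blockTriangular_prodMap (φ : V₂ →ₗ[𝕜] B) (ψ : W₂ →ₗ[𝕜] C)
    (hf : σ ∘ₗ φ = F + ψ ∘ₗ f₂) (hg : τ ∘ₗ φ = G + ψ ∘ₗ g₂) :
    StrictlyEquivalent (blockTriangular f₂ F σ) (blockTriangular g₂ G τ)
      (f₂.prodMap σ) (g₂.prodMap τ) := by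
  refine ⟨(LinearEquiv.refl 𝕜 V₂).skewProd (LinearEquiv.refl 𝕜 B) φ,
    (LinearEquiv.refl 𝕜 W₂).skewProd (LinearEquiv.refl 𝕜 C) ψ, ?_, ?_⟩ <;>
    refine LinearMap.ext fun x => Prod.ext rfl ?_
  · have := LinearMap.congr_fun hf x.1
    simp only [LinearMap.comp_apply, LinearMap.add_apply] at this
    simp [this]; abel
  · have := LinearMap.congr_fun hg x.1
    simp only [LinearMap.comp_apply, LinearMap.add_apply] at this
    simp [this]; abel

/-- A chain of `(f₂, g₂)` lifts to one of the triangular pencil up to an error in `C`, which the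
surjective chain operator of the diagonal block `(σ, τ)` corrects. -/
lemma injective_chainMap_of_blockTriangular {m : ℕ}
    (hT : Injective (chainMap (blockTriangular f₂ F σ) (blockTriangular g₂ G τ) m))
    (hB : Surjective (chainMap σ τ m)) : Injective (chainMap f₂ g₂ m) := by
  have hfst := LinearMap.congr_fun <| chainMap_comp_compLeft (f := blockTriangular f₂ F σ)
    (g := blockTriangular g₂ G τ) (f' := f₂) (g' := g₂)
    (LinearMap.fst 𝕜 V₂ B) (LinearMap.fst 𝕜 W₂ C) (by ext <;> simp) (by ext <;> simp) m
  have hinr := LinearMap.congr_fun <| chainMap_comp_compLeft (f := σ) (g := τ)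
    (f' := blockTriangular f₂ F σ) (g' := blockTriangular g₂ G τ)
    (LinearMap.inr 𝕜 V₂ B) (LinearMap.inr 𝕜 W₂ C) (by ext <;> simp) (by ext <;> simp) m
  refine (injective_iff_map_eq_zero _).mpr fun y hy => ?_
  let z : Fin m → V₂ × B := fun i => (y i, 0)
  have hz : ∀ i, (chainMap (blockTriangular f₂ F σ) (blockTriangular g₂ G τ) m z i).1 = 0 :=
    fun i => by
      have := congr_fun (hfst z) i
      rw [LinearMap.comp_apply, show (LinearMap.fst 𝕜 V₂ B).compLeft (Fin m) z = y from rfl,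
        hy] at this
      exact this.symm
  obtain ⟨x, hx⟩ :=
    hB fun i => (chainMap (blockTriangular f₂ F σ) (blockTriangular g₂ G τ) m z i).2
  have hxz : (fun i => ((0 : V₂), x i)) = z := hT <| by
    ext i : 1
    have := congr_fun (hinr x) i
    rw [LinearMap.comp_apply, LinearMap.comp_apply, hx] at this
    exact this.trans (Prod.ext (hz i).symm rfl)
  funext i
  simpa [z] using congr_arg Prod.fst (congr_fun hxz i).symm

end Triangular

lemma exists_strictlyEquivalent_blockTriangular {B C : Type*} [AddCommGroup B] [Module 𝕜 B]
    [AddCommGroup C] [Module 𝕜 C] {X : B →ₗ[𝕜] V} {Y : C →ₗ[𝕜] W} (hX : Injective X)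
    (hY : Injective Y) {σ τ : B →ₗ[𝕜] C} (hf : f ∘ₗ X = Y ∘ₗ σ) (hg : g ∘ₗ X = Y ∘ₗ τ) :
    ∃ (V₂ : Submodule 𝕜 V) (W₂ : Submodule 𝕜 W) (f₂ g₂ : V₂ →ₗ[𝕜] W₂) (F G : V₂ →ₗ[𝕜] C),
      StrictlyEquivalent f g (blockTriangular f₂ F σ) (blockTriangular g₂ G τ) := by
  obtain ⟨V₂, hV⟩ := Submodule.exists_isCompl (range X)
  obtain ⟨W₂, hW⟩ := Submodule.exists_isCompl (range Y)
  let e : (V₂ × B) ≃ₗ[𝕜] V := ((LinearEquiv.refl 𝕜 V₂).prodCongr (LinearEquiv.ofInjective X hX))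
    ≪≫ₗ Submodule.prodEquivOfIsCompl V₂ (range X) hV.symm
  let e' : (W₂ × C) ≃ₗ[𝕜] W := ((LinearEquiv.refl 𝕜 W₂).prodCongr (LinearEquiv.ofInjective Y hY))
    ≪≫ₗ Submodule.prodEquivOfIsCompl W₂ (range Y) hW.symm
  have hconj : ∀ {k : V →ₗ[𝕜] W} {ρ : B →ₗ[𝕜] C}, k ∘ₗ X = Y ∘ₗ ρ →
      (e'.symm.toLinearMap ∘ₗ k ∘ₗ e.toLinearMap) ∘ₗ LinearMap.inr 𝕜 V₂ B =
        LinearMap.inr 𝕜 W₂ C ∘ₗ ρ := by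
    intro k ρ hk
    refine LinearMap.ext fun b => ?_
    have he : e (0, b) = X b := by simp [e]
    have he' : e' (0, ρ b) = Y (ρ b) := by simp [e']
    simp only [LinearMap.comp_apply, LinearEquiv.coe_coe, LinearMap.inr_apply, he,
      LinearEquiv.symm_apply_eq, he']
    exact LinearMap.congr_fun hk b
  let c : (V →ₗ[𝕜] W) → (V₂ × B →ₗ[𝕜] W₂ × C) := fun k =>
    e'.symm.toLinearMap ∘ₗ k ∘ₗ e.toLinearMap
  refine ⟨V₂, W₂, LinearMap.fst 𝕜 W₂ C ∘ₗ c f ∘ₗ LinearMap.inl 𝕜 V₂ B,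
    LinearMap.fst 𝕜 W₂ C ∘ₗ c g ∘ₗ LinearMap.inl 𝕜 V₂ B,
    LinearMap.snd 𝕜 W₂ C ∘ₗ c f ∘ₗ LinearMap.inl 𝕜 V₂ B,
    LinearMap.snd 𝕜 W₂ C ∘ₗ c g ∘ₗ LinearMap.inl 𝕜 V₂ B, e.symm, e'.symm, ?_, ?_⟩
  · rw [← eq_blockTriangular (hconj hf)]
    exact LinearMap.ext fun x => by simp
  · rw [← eq_blockTriangular (hconj hg)]
    exact LinearMap.ext fun x => by simp

lemma exists_dual_solution {m : ℕ} (h : Injective (chainMap f g m)) (r : Fin m → Dual 𝕜 V) :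
    ∃ ψ : Fin (m + 1) → Dual 𝕜 W, ∀ t, ψ t.castSucc ∘ₗ g - ψ t.succ ∘ₗ f = r t := by
  obtain ⟨Φ, hΦ⟩ := dualMap_surjective_of_injective h (∑ t, r t ∘ₗ LinearMap.proj t)
  refine ⟨fun s => Φ ∘ₗ LinearMap.single 𝕜 (fun _ => W) s, fun t => LinearMap.ext fun x => ?_⟩
  have := LinearMap.congr_fun hΦ (Pi.single t x)
  simp only [LinearMap.dualMap_apply, chainMap_single, map_sub] at this
  simpa [Pi.single_apply, apply_ite] using this

/-- Eliminating `φ` leaves the equations `ψₜ ∘ g - ψₜ₊₁ ∘ f = Fₜ₊₁ - Gₜ`, whose operator is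
the dual of `chainMap f g m`. -/
lemma exists_sylvester_solution {m : ℕ} (h : Injective (chainMap f g m))
    (F G : V →ₗ[𝕜] Fin (m + 1) → 𝕜) :
    ∃ (φ : V →ₗ[𝕜] Fin (m + 2) → 𝕜) (ψ : W →ₗ[𝕜] Fin (m + 1) → 𝕜),
      funLeft 𝕜 𝕜 Fin.castSucc ∘ₗ φ = F + ψ ∘ₗ f ∧ funLeft 𝕜 𝕜 Fin.succ ∘ₗ φ = G + ψ ∘ₗ g := by
  obtain ⟨ψ, hψ⟩ := exists_dual_solution h fun t =>
    LinearMap.proj t.succ ∘ₗ F - LinearMap.proj t.castSucc ∘ₗ G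
  refine ⟨LinearMap.pi (Fin.lastCases (motive := fun _ => Dual 𝕜 V)
    (LinearMap.proj (Fin.last m) ∘ₗ G + ψ (Fin.last m) ∘ₗ g)
    fun j => LinearMap.proj j ∘ₗ F + ψ j ∘ₗ f), LinearMap.pi ψ, ?_, ?_⟩
  · ext x j
    simp
  · refine LinearMap.ext fun x => funext fun j => Fin.lastCases ?_ (fun t => ?_) j
    · simp
    · have := LinearMap.congr_fun (hψ t) x
      simp only [LinearMap.sub_apply, LinearMap.comp_apply, LinearMap.coe_proj,
        Function.eval] at this
      simp only [LinearMap.comp_apply, funLeft_apply, LinearMap.pi_apply, Fin.succ_castSucc,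
        Fin.lastCases_castSucc, LinearMap.add_apply, LinearMap.coe_proj, Function.eval,
        Pi.add_apply]
      linear_combination -this

lemma strictlyEquivalent_prodMap_of_blockTriangular {m : ℕ} {F G : V →ₗ[𝕜] Fin (m + 1) → 𝕜}
    (h : Injective (chainMap (blockTriangular f F (funLeft 𝕜 𝕜 Fin.castSucc))
      (blockTriangular g G (funLeft 𝕜 𝕜 Fin.succ)) (m + 1))) :
    StrictlyEquivalent (blockTriangular f F (funLeft 𝕜 𝕜 Fin.castSucc))
      (blockTriangular g G (funLeft 𝕜 𝕜 Fin.succ))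
      (f.prodMap (funLeft 𝕜 𝕜 (Fin.castSucc : Fin (m + 1) → Fin (m + 2))))
      (g.prodMap (funLeft 𝕜 𝕜 Fin.succ)) := by
  have hblock : Injective (chainMap (funLeft 𝕜 𝕜 (Fin.castSucc : Fin (m + 1) → Fin (m + 2)))
      (funLeft 𝕜 𝕜 Fin.succ) (m + 1)) :=
    injective_chainMap_of_injective (LinearMap.inr 𝕜 W _) LinearMap.inr_injective
      (by ext <;> simp) (by ext <;> simp) h
  have hsurj := (LinearMap.injective_iff_surjective_of_finrank_eq_finrank
    (by simp [Module.finrank_pi_fintype]; ring)).mp hblock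
  obtain ⟨φ, ψ, hf, hg⟩ := exists_sylvester_solution
    (injective_chainMap_of_succ (injective_chainMap_of_blockTriangular h hsurj)) F G
  exact strictlyEquivalent_blockTriangular_prodMap φ ψ hf hg

lemma finrank_lt_finrank_of_membersSurjective [IsAlgClosed 𝕜] [FiniteDimensional 𝕜 V]
    [Nontrivial V] (h : MembersSurjective f g) : finrank 𝕜 W < finrank 𝕜 V := by
  have hf : Surjective f := by simpa using h 1 0 (by simp)
  have hg : Surjective g := by simpa using h 0 1 (by simp)
  have : FiniteDimensional 𝕜 W := Module.Finite.of_surjective f hf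
  have hle := f.finrank_range_le
  rw [LinearMap.range_eq_top.mpr hf, finrank_top] at hle
  refine hle.lt_of_ne fun heq => ?_
  let e := LinearEquiv.ofBijective g
    ⟨(injective_iff_surjective_of_finrank_eq_finrank heq.symm).mpr hg, hg⟩
  obtain ⟨μ, hμ⟩ := Module.End.exists_eigenvalue (e.symm.toLinearMap ∘ₗ f)
  obtain ⟨v, hv⟩ := hμ.exists_hasEigenvector
  have hfv : f v = μ • g v := by
    have := congr_arg e hv.apply_eq_smul
    rwa [LinearMap.comp_apply, LinearEquiv.coe_coe, LinearEquiv.apply_symm_apply,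
      LinearEquiv.map_smul] at this
  have hinj := (injective_iff_surjective_of_finrank_eq_finrank heq.symm).mpr
    (h 1 (-μ) (by simp))
  exact hv.2 (hinj (by simp [hfv]))

lemma exists_injective_chainMap_not_injective_succ [FiniteDimensional 𝕜 V]
    [FiniteDimensional 𝕜 W] (h : finrank 𝕜 W < finrank 𝕜 V) :
    ∃ ℓ, Injective (chainMap f g ℓ) ∧ ¬ Injective (chainMap f g (ℓ + 1)) := by
  by_contra! H
  have hall : ∀ ℓ, Injective (chainMap f g ℓ) := fun ℓ => by
    induction ℓ with
    | zero => exact injective_chainMap_zero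
    | succ ℓ ih => exact H ℓ ih
  have := LinearMap.finrank_le_finrank_of_injective (hall (finrank 𝕜 W + 1))
  simp only [Module.finrank_pi_fintype, Finset.sum_const, Finset.card_univ, Fintype.card_fin,
    smul_eq_mul] at this
  nlinarith

section MinimalChain

variable {m : ℕ} {x : Fin (m + 1) → V}

lemma last_ne_zero_of_chainMap_eq_zero (hinj : Injective (chainMap f g m))
    (hx : chainMap f g (m + 1) x = 0) (hx0 : x ≠ 0) : x (Fin.last m) ≠ 0 := by
  intro hlast
  have hv := injective_chainMap_iff.mp hinj _ ((chainMap_eq_zero_iff x).mp hx) fun t ht => by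
    rcases ht.eq_or_lt with h | h
    · rw [← h, extendByZero, dif_pos (Nat.lt_succ_self m)]
      exact hlast
    · exact extendByZero_of_le x h
  exact hx0 (funext fun i => by simpa using congr_fun hv i)

/-- A relation `∑ cₜ • f xₜ = 0` makes the shifted sums `∑ cₜ • x_{j+t+1}` a chain shorter than
`x`, so they vanish; for the first `s` with `cₛ ≠ 0` one of them is `cₛ • x_m`. -/
lemma linearIndependent_image_of_chainMap_eq_zero (hinj : Injective (chainMap f g m))
    (hx : chainMap f g (m + 1) x = 0) (hx0 : x ≠ 0) :
    LinearIndependent 𝕜 fun t : Fin m => f (x t.castSucc) := by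
  have hlast := last_ne_zero_of_chainMap_eq_zero hinj hx hx0
  have hv := (chainMap_eq_zero_iff x).mp hx
  refine Fintype.linearIndependent_iff.mpr fun c hc => ?_
  let w : ℕ → V := fun j => ∑ t : Fin m, c t • extendByZero x (j + t + 1)
  have hw : w = 0 := by
    refine injective_chainMap_iff.mp hinj w ⟨?_, fun j => ?_⟩ fun j hj => ?_
    · simp only [w, map_sum, map_smul, zero_add, ← hv.2]
      simpa [← extendByZero_coe x (Fin.castSucc _)] using hc
    · simp only [w, map_sum, map_smul, hv.2]
      exact Finset.sum_congr rfl fun t _ => by rw [show j + 1 + t + 1 = j + t + 1 + 1 by omega]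
    · exact Finset.sum_eq_zero fun t _ => by
        rw [extendByZero_of_le x (by omega : m + 1 ≤ j + t + 1), smul_zero]
  by_contra! hc0
  obtain ⟨s, hs, hmin⟩ := WellFounded.has_min wellFounded_lt {t | c t ≠ 0} hc0
  have hws : w (m - 1 - s) = c s • x (Fin.last m) := by
    refine (Finset.sum_eq_single s (fun t _ hts => ?_) (by simp)).trans ?_
    · rcases lt_or_gt_of_ne hts with hlt | hlt
      · rw [not_not.mp fun h => hmin t h hlt, zero_smul]
      · rw [extendByZero_of_le x (by omega), smul_zero]
    · rw [extendByZero, dif_pos (by omega)]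
      congr 2
      ext
      simp only [Fin.val_last]
      omega
  rw [hw, Pi.zero_apply, eq_comm, smul_eq_zero] at hws
  exact hws.elim hs hlast

lemma apply_last_eq_zero_of_chainMap_eq_zero (hx : chainMap f g (m + 1) x = 0) :
    f (x (Fin.last m)) = 0 := by
  have h := ((chainMap_eq_zero_iff x).mp hx).2 m
  rw [extendByZero_of_le x le_rfl, map_zero] at h
  rwa [← extendByZero_coe x (Fin.last m)]

lemma linearIndependent_of_chainMap_eq_zero (hinj : Injective (chainMap f g m))
    (hx : chainMap f g (m + 1) x = 0) (hx0 : x ≠ 0) : LinearIndependent 𝕜 x := by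
  have hlast := last_ne_zero_of_chainMap_eq_zero hinj hx hx0
  have hfx := apply_last_eq_zero_of_chainMap_eq_zero hx
  refine Fintype.linearIndependent_iff.mpr fun c hc => ?_
  rw [Fin.sum_univ_castSucc] at hc
  have hinit : ∀ t : Fin m, c t.castSucc = 0 := by
    have := congr_arg f hc
    rw [map_add, map_sum, map_smul, hfx, smul_zero, add_zero, map_zero] at this
    simp only [map_smul] at this
    exact Fintype.linearIndependent_iff.mp
      (linearIndependent_image_of_chainMap_eq_zero hinj hx hx0) _ this
  simp only [hinit, zero_smul, Finset.sum_const_zero, zero_add, smul_eq_zero] at hc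
  intro i
  induction i using Fin.lastCases with
  | last => exact hc.resolve_right hlast
  | cast t => exact hinit t

lemma comp_linearCombination_of_chainMap_eq_zero (hx : chainMap f g (m + 1) x = 0) :
    f ∘ₗ Fintype.linearCombination 𝕜 x =
        Fintype.linearCombination 𝕜 (fun t => f (x t.castSucc)) ∘ₗ funLeft 𝕜 𝕜 Fin.castSucc ∧
      g ∘ₗ Fintype.linearCombination 𝕜 x =
        Fintype.linearCombination 𝕜 (fun t => f (x t.castSucc)) ∘ₗ funLeft 𝕜 𝕜 Fin.succ := by
  have hv := (chainMap_eq_zero_iff x).mp hx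
  have hfx := apply_last_eq_zero_of_chainMap_eq_zero hx
  have hgx : g (x 0) = 0 := by simpa [extendByZero] using hv.1
  have hstep : ∀ t : Fin m, g (x t.succ) = f (x t.castSucc) := fun t => by
    simpa [← extendByZero_coe x (Fin.castSucc _), ← extendByZero_coe x (Fin.succ _)] using
      (hv.2 t).symm
  constructor <;> refine LinearMap.ext fun c => ?_
  · simp [Fintype.linearCombination_apply, Fin.sum_univ_castSucc, hfx]
  · simp [Fintype.linearCombination_apply, Fin.sum_univ_succ, hgx, hstep]

end MinimalChain

theorem exists_strictlyEquivalent_prodMap_block [IsAlgClosed 𝕜] [FiniteDimensional 𝕜 V]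
    [Nontrivial V] (hs : MembersSurjective f g) (hd : Disjoint (ker f) (ker g)) :
    ∃ (m : ℕ) (V₂ : Submodule 𝕜 V) (W₂ : Submodule 𝕜 W) (f₂ g₂ : V₂ →ₗ[𝕜] W₂),
      StrictlyEquivalent f g (f₂.prodMap (funLeft 𝕜 𝕜 (Fin.castSucc : Fin (m + 1) → Fin (m + 2))))
        (g₂.prodMap (funLeft 𝕜 𝕜 Fin.succ)) := by
  have : FiniteDimensional 𝕜 W := Module.Finite.of_surjective f (by simpa using hs 1 0 (by simp))
  obtain ⟨ℓ, hinj, hnot⟩ :=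
    exists_injective_chainMap_not_injective_succ (finrank_lt_finrank_of_membersSurjective hs)
  obtain ⟨m, rfl⟩ : ∃ m, ℓ = m + 1 :=
    Nat.exists_eq_add_one.mpr (Nat.pos_of_ne_zero fun h => by
      subst h; exact hnot (injective_chainMap_one hd))
  obtain ⟨x, hx, hx0⟩ : ∃ x, chainMap f g (m + 2) x = 0 ∧ x ≠ 0 := by
    simpa [injective_iff_map_eq_zero] using hnot
  obtain ⟨hfX, hgX⟩ := comp_linearCombination_of_chainMap_eq_zero hx
  obtain ⟨V₂, W₂, f₂, g₂, F, G, hT⟩ := exists_strictlyEquivalent_blockTriangular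
    (linearIndependent_iff_injective_fintypeLinearCombination.mp
      (linearIndependent_of_chainMap_eq_zero hinj hx hx0))
    (linearIndependent_iff_injective_fintypeLinearCombination.mp
      (linearIndependent_image_of_chainMap_eq_zero hinj hx hx0)) hfX hgX
  exact ⟨m, V₂, W₂, f₂, g₂,
    hT.trans (strictlyEquivalent_prodMap_of_blockTriangular (hT.injective_chainMap hinj))⟩

theorem exists_isBlockShape_strictlyEquivalent [IsAlgClosed 𝕜] [FiniteDimensional 𝕜 V]
    (hs : MembersSurjective f g) (hd : Disjoint (ker f) (ker g)) :
    ∃ (M N : ℕ) (s t : Fin M → Fin N),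
      IsBlockShape s t ∧ StrictlyEquivalent f g (funLeft 𝕜 𝕜 s) (funLeft 𝕜 𝕜 t) := by
  induction hV : finrank 𝕜 V using Nat.strong_induction_on generalizing V W with
  | _ d ih =>
  rcases subsingleton_or_nontrivial V with hV0 | hV0
  · have : Subsingleton W := (hs 1 0 (by simp)).subsingleton
    refine ⟨0, 0, Fin.elim0, Fin.elim0, ⟨fun j => j.elim0, fun j => j.elim0, fun i => i.elim0⟩,
      LinearEquiv.ofSubsingleton _ _, LinearEquiv.ofSubsingleton _ _, ?_, ?_⟩ <;>
      exact LinearMap.ext fun _ => Subsingleton.elim _ _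
  · obtain ⟨m, V₂, W₂, f₂, g₂, h⟩ := exists_strictlyEquivalent_prodMap_block hs hd
    obtain ⟨M, N, s, t, hst, h₂⟩ := ih (finrank 𝕜 V₂) (by
        obtain ⟨e, -⟩ := h
        rw [← hV, e.finrank_eq, Module.finrank_prod]
        simp) (h.membersSurjective hs).of_prodMap
      (disjoint_ker_of_prodMap (h.disjoint_ker hd)) rfl
    exact ⟨_, _, _, _, hst.append (isBlockShape_castSucc_succ m),
      h.trans (h₂.prodMap.trans (strictlyEquivalent_prodMap_funLeft _ _ _ _))⟩

section FormMatrix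

variable {ι : Type*} (Ω : Fin 2 → ι → Dual 𝕜 V)

lemma disjoint_ker_pi
    (hspan : Submodule.span 𝕜 (Set.range fun p : Fin 2 × ι => Ω p.1 p.2) = ⊤) :
    Disjoint (ker (LinearMap.pi (Ω 0))) (ker (LinearMap.pi (Ω 1))) := by
  refine Submodule.disjoint_def.mpr fun x h0 h1 => ?_
  have hle : Submodule.span 𝕜 (Set.range fun p : Fin 2 × ι => Ω p.1 p.2) ≤
      ker (Module.Dual.eval 𝕜 V x) := by
    refine Submodule.span_le.mpr ?_
    rintro _ ⟨⟨i, j⟩, rfl⟩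
    fin_cases i
    · exact congr_fun (LinearMap.mem_ker.mp h0) j
    · exact congr_fun (LinearMap.mem_ker.mp h1) j
  rw [hspan] at hle
  exact (Module.forall_dual_apply_eq_zero_iff 𝕜 x).mp fun φ => hle (Submodule.mem_top (x := φ))

variable [Fintype ι] [DecidableEq ι]

lemma membersSurjective_pi
    (hgen : ∀ u : Fin 2 → 𝕜, u ≠ 0 → ∀ v : ι → 𝕜, v ≠ 0 → ∑ i, ∑ j, (u i * v j) • Ω i j ≠ 0) :
    MembersSurjective (LinearMap.pi (Ω 0)) (LinearMap.pi (Ω 1)) := by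
  intro a b hab
  by_contra hns
  obtain ⟨φ, hφ0, hφ⟩ :=
    (range (a • LinearMap.pi (Ω 0) + b • LinearMap.pi (Ω 1))).exists_le_ker_of_lt_top
      (lt_top_iff_ne_top.mpr (mt range_eq_top.mp hns))
  have hφv : ∀ y : ι → 𝕜, φ y = ∑ j, y j * φ (Pi.single j 1) := fun y => by
    conv_lhs => rw [← (Pi.basisFun 𝕜 ι).sum_repr y]
    simp
  refine hgen ![a, b] ?_ (fun j => φ (Pi.single j 1)) ?_ (LinearMap.ext fun x => ?_)
  · intro h
    exact hab (Prod.ext (congr_fun h 0) (congr_fun h 1))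
  · intro h
    exact hφ0 (LinearMap.ext fun y => by simp [hφv y, congr_fun h])
  · have := LinearMap.mem_ker.mp (hφ ⟨x, rfl⟩)
    rw [hφv] at this
    simpa [Fin.sum_univ_two, Finset.sum_add_distrib, add_mul, mul_comm, mul_left_comm,
      mul_assoc] using this

lemma sum_toMatrix'_smul (Φ : ι → Dual 𝕜 V) (e : (ι → 𝕜) →ₗ[𝕜] ι → 𝕜) (j : ι) :
    ∑ t, LinearMap.toMatrix' e j t • Φ t = LinearMap.proj j ∘ₗ e ∘ₗ LinearMap.pi Φ := by
  ext x
  conv_rhs => rw [LinearMap.comp_apply, LinearMap.comp_apply,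
    ← (Pi.basisFun 𝕜 ι).sum_repr (LinearMap.pi Φ x)]
  simp [mul_comm]

end FormMatrix

end Pencil

lemma matConj_one_left {k n : ℕ} (Ω : Matrix (Fin 2) (Fin k) (Module.Dual ℂ (Fin (n+1) → ℂ)))
    (Q : Matrix (Fin k) (Fin k) ℂ) (i : Fin 2) (j : Fin k) :
    matConj 1 Ω Q i j = ∑ t, Q t j • Ω i t := by
  simp [matConj, Matrix.one_apply, ite_smul]

/-- A `1`-generic `2 × k` matrix of linear forms on `ℂ^{n+1}`
(`1 ≤ k ≤ n-1`) whose entries span the dual space is conjugate to a matrix made of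
consecutive catalecticant blocks: for some basis `z₀, …, z_n` of the dual space, the
`j`-th column is `(z_{c(j)}, z_{c(j)+1})` where `c` is strictly increasing with steps
`1` or `2`, `c(0) = 0` and `c(k-1) = n-1`. -/
theorem stmt_8 (n k : ℕ) (hk : 1 ≤ k)
    (Ω : Matrix (Fin 2) (Fin k) (Module.Dual ℂ (Fin (n+1) → ℂ)))
    (hgen : ∀ u : Fin 2 → ℂ, u ≠ 0 → ∀ v : Fin k → ℂ, v ≠ 0 →
      (∑ i, ∑ j, (u i * v j) • Ω i j) ≠ 0)
    (hspan : Submodule.span ℂ (Set.range fun p : Fin 2 × Fin k => Ω p.1 p.2) = ⊤) :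
    ∃ P : Matrix (Fin 2) (Fin 2) ℂ, IsUnit P ∧
    ∃ Q : Matrix (Fin k) (Fin k) ℂ, IsUnit Q ∧
    ∃ z : Module.Basis (Fin (n+1)) ℂ (Module.Dual ℂ (Fin (n+1) → ℂ)),
    ∃ c : Fin k → Fin n,
      StrictMono c ∧
      ((c ⟨0, by omega⟩ : Fin n) : ℕ) = 0 ∧
      ((c ⟨k-1, by omega⟩ : Fin n) : ℕ) = n - 1 ∧
      (∀ (j : ℕ) (hj : j + 1 < k),
        ((c ⟨j+1, hj⟩ : Fin n) : ℕ) - ((c ⟨j, by omega⟩ : Fin n) : ℕ) = 1 ∨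
        ((c ⟨j+1, hj⟩ : Fin n) : ℕ) - ((c ⟨j, by omega⟩ : Fin n) : ℕ) = 2) ∧
      ∀ j : Fin k,
        matConj P Ω Q 0 j = z (Fin.castSucc (c j)) ∧
        matConj P Ω Q 1 j = z (Fin.succ (c j)) := by
  obtain ⟨M, N, s, t, hst, e, e', hf, hg⟩ := Pencil.exists_isBlockShape_strictlyEquivalent
    (Pencil.membersSurjective_pi Ω hgen) (Pencil.disjoint_ker_pi Ω hspan)
  obtain rfl : N = n + 1 := by simpa using e.finrank_eq.symm
  obtain rfl : k = M := by simpa using e'.finrank_eq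
  let z := ((Pi.basisFun ℂ (Fin (n + 1))).map e.symm).dualBasis
  have hrow : ∀ i (ρ : Fin k → Fin (n + 1)),
      e'.toLinearMap ∘ₗ LinearMap.pi (Ω i) = LinearMap.funLeft ℂ ℂ ρ ∘ₗ e.toLinearMap →
      ∀ j, matConj 1 Ω (LinearMap.toMatrix' e'.toLinearMap)ᵀ i j = z (ρ j) := by
    intro i ρ hρ j
    rw [matConj_one_left]
    simp only [Matrix.transpose_apply]
    rw [Pencil.sum_toMatrix'_smul, hρ]
    ext x
    simp [z]
  let c : Fin k → Fin n := fun j => ⟨s j, by have := hst.val_succ j; have := (t j).isLt; omega⟩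
  refine ⟨1, isUnit_one, (LinearMap.toMatrix' e'.toLinearMap)ᵀ, ?_, z, c,
    fun j j' h => hst.strictMono h, hst.val_zero (by omega), hst.val_last (by omega),
    hst.val_succ_sub, fun j => ⟨hrow 0 s hf j, ?_⟩⟩
  · rw [Matrix.isUnit_transpose, LinearMap.isUnit_toMatrix'_iff]
    exact (LinearMap.isUnit_iff_ker_eq_bot _).mpr e'.ker
  · rw [hrow 1 t hg j]
    congr 1
    exact Fin.ext (hst.val_succ j)
end

section
/- Let r ≥ 1 and let M be a linear subspace of the space of skew-symmetric (2r+2)×(2r+2) complex matrices such that every nonzero matrix in M has rank 2r. If A and B are nonzero matrices in M with ker A = ker B (as subspaces of ℂ^{2r+2}), then B is a scalar multiple of A. (Equivalently, the map sending the line spanned by a nonzero A ∈ M to its 2-dimensional kernel is injective.) -/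
/-!
Skew-symmetry identifies the range of `A` with the dot-product annihilator of `ker A`, so `A` and
`B` have the same range `W`. As `ℂ` is algebraically closed, `B ∘ A⁻¹` has an eigenvalue `t` on `W`,
which gives `v ∉ ker A` with `B v = t • A v`. Then `ker (B - t • A)` strictly contains `ker A`, so
`B - t • A ∈ M` has rank below `2 * r` and must vanish.
-/

open Matrix Module LinearMap

theorem Matrix.dotProductEquiv_comp_mulVecLin_transpose {R m n : Type*} [CommSemiring R]
    [Fintype m] [Fintype n] [DecidableEq m] [DecidableEq n] (A : Matrix m n R) :
    (dotProductEquiv R n).toLinearMap ∘ₗ Aᵀ.mulVecLin =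
      A.mulVecLin.dualMap ∘ₗ (dotProductEquiv R m).toLinearMap := by
  ext y x
  simp

section Transpose

variable {K m n : Type*} [Field K] [Fintype m] [Fintype n] [DecidableEq m] [DecidableEq n]

theorem Matrix.range_mulVecLin_transpose (A : Matrix m n K) :
    range Aᵀ.mulVecLin =
      (ker A.mulVecLin).dualAnnihilator.comap (dotProductEquiv K n).toLinearMap := by
  rw [← range_dualMap_eq_dualAnnihilator_ker,
    ← range_comp_of_range_eq_top _ (dotProductEquiv K m).range,
    ← dotProductEquiv_comp_mulVecLin_transpose, range_comp,
    Submodule.comap_map_eq_of_injective (dotProductEquiv K n).injective]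

theorem Matrix.range_mulVecLin_transpose_eq_of_ker_eq {A B : Matrix m n K}
    (h : ker A.mulVecLin = ker B.mulVecLin) : range Aᵀ.mulVecLin = range Bᵀ.mulVecLin := by
  rw [range_mulVecLin_transpose, range_mulVecLin_transpose, h]

theorem Matrix.range_mulVecLin_eq_of_ker_eq_of_transpose_eq_neg {A B : Matrix n n K}
    (hA : Aᵀ = -A) (hB : Bᵀ = -B) (h : ker A.mulVecLin = ker B.mulVecLin) :
    range A.mulVecLin = range B.mulVecLin := by
  have range_neg (C : Matrix n n K) : range (-C).mulVecLin = range C.mulVecLin := by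
    rw [← LinearMap.range_neg C.mulVecLin]
    congr 1
    ext
    simp
  rw [← range_neg A, ← range_neg B, ← hA, ← hB, range_mulVecLin_transpose_eq_of_ker_eq h]

end Transpose

theorem LinearMap.exists_apply_eq_smul_apply_of_range_le {K V W : Type*} [Field K]
    [IsAlgClosed K] [AddCommGroup V] [Module K V] [FiniteDimensional K V] [AddCommGroup W]
    [Module K W] {f g : V →ₗ[K] W} (hf : f ≠ 0) (hgf : range g ≤ range f) :
    ∃ (t : K) (v : V), f v ≠ 0 ∧ g v = t • f v := by
  have : Nontrivial (range f) := Submodule.nontrivial_iff_ne_bot.mpr (range_eq_bot.not.mpr hf)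
  obtain ⟨s, hs⟩ := f.rangeRestrict.exists_rightInverse_of_surjective f.range_rangeRestrict
  obtain ⟨t, ht⟩ :=
    Module.End.exists_eigenvalue (g.codRestrict (range f) (fun v => hgf ⟨v, rfl⟩) ∘ₗ s)
  obtain ⟨w, hw⟩ := ht.exists_hasEigenvector
  have hfs : f (s w) = w := congrArg Subtype.val (LinearMap.congr_fun hs w)
  refine ⟨t, s w, ?_, ?_⟩
  · rw [hfs]
    exact_mod_cast hw.right
  · rw [hfs]
    exact congrArg Subtype.val hw.apply_eq_smul

theorem LinearMap.finrank_range_lt_of_ker_lt {K V W : Type*} [DivisionRing K] [AddCommGroup V]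
    [Module K V] [FiniteDimensional K V] [AddCommGroup W] [Module K W] {f g : V →ₗ[K] W}
    (h : ker f < ker g) : finrank K (range g) < finrank K (range f) := by
  have := Submodule.finrank_lt_finrank_of_lt h
  have := f.finrank_range_add_finrank_ker
  have := g.finrank_range_add_finrank_ker
  omega

theorem stmt_9_general (r : ℕ)
    (M : Submodule ℂ (Matrix (Fin (2*r+2)) (Fin (2*r+2)) ℂ))
    (hskew : ∀ A ∈ M, Aᵀ = -A)
    (hrank : ∀ A ∈ M, A ≠ 0 → A.rank = 2*r)
    (A B : Matrix (Fin (2*r+2)) (Fin (2*r+2)) ℂ)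
    (hA : A ∈ M) (hB : B ∈ M) (hA0 : A ≠ 0)
    (hker : LinearMap.ker (Matrix.mulVecLin A) = LinearMap.ker (Matrix.mulVecLin B)) :
    ∃ c : ℂ, B = c • A := by
  have hrange := range_mulVecLin_eq_of_ker_eq_of_transpose_eq_neg (hskew A hA) (hskew B hB) hker
  have hA0' : A.mulVecLin ≠ 0 := fun h =>
    hA0 (toLin'.injective (by rw [map_zero, toLin'_apply', h]))
  obtain ⟨t, v, hAv, hBv⟩ := exists_apply_eq_smul_apply_of_range_le hA0' hrange.ge
  refine ⟨t, ?_⟩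
  by_contra hBt
  have hC : ∀ x, (B - t • A) *ᵥ x = B *ᵥ x - t • A *ᵥ x := fun x => by
    rw [sub_mulVec, smul_mulVec]
  have hker_lt : ker A.mulVecLin < ker (B - t • A).mulVecLin := by
    refine lt_of_le_of_ne (fun x hx => ?_) (fun h => hAv ?_)
    · have hBx : x ∈ ker B.mulVecLin := hker ▸ hx
      rw [mem_ker, mulVecLin_apply] at hx hBx ⊢
      rw [hC, hx, hBx, smul_zero, sub_zero]
    · have hv : v ∈ ker (B - t • A).mulVecLin := by
        rw [mem_ker, mulVecLin_apply, hC, ← mulVecLin_apply, hBv, mulVecLin_apply, sub_self]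
      exact mem_ker.mp (h ▸ hv)
  have hrkC := hrank _ (M.sub_mem hB (M.smul_mem t hA)) (sub_ne_zero.mpr hBt)
  have hrkA := hrank A hA hA0
  have := finrank_range_lt_of_ker_lt hker_lt
  rw [Matrix.rank] at hrkA hrkC
  omega

/-- In a space of skew-symmetric `(2r+2)×(2r+2)` complex matrices of
constant rank `2r`, two nonzero elements with the same kernel are proportional. -/
theorem stmt_9 (r : ℕ) (hr : 1 ≤ r)
    (M : Submodule ℂ (Matrix (Fin (2*r+2)) (Fin (2*r+2)) ℂ))
    (hskew : ∀ A ∈ M, Aᵀ = -A)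
    (hrank : ∀ A ∈ M, A ≠ 0 → A.rank = 2*r)
    (A B : Matrix (Fin (2*r+2)) (Fin (2*r+2)) ℂ)
    (hA : A ∈ M) (hB : B ∈ M) (hA0 : A ≠ 0) (hB0 : B ≠ 0)
    (hker : LinearMap.ker (Matrix.mulVecLin A) = LinearMap.ker (Matrix.mulVecLin B)) :
    ∃ c : ℂ, B = c • A :=
  stmt_9_general r M hskew hrank A B hA hB hA0 hker
end

section
/- Let r ≥ 1, n ≥ 2, and let M be a linear subspace of the space of skew-symmetric n×n complex matrices such that every nonzero matrix in M has rank 2r. Let O ∈ ℂⁿ be a nonzero vector, and let Q be an (n−1)×n complex matrix of rank n−1 with Q·O = 0. Assume that no nonzero matrix in M has the form O vᵀ − v Oᵀ for some v ∈ ℂⁿ. Then every nonzero A ∈ M satisfies rank(Q A Qᵀ) = 2r if and only if for every nonzero A ∈ M the vector O does not lie in the column space (range) of A. -/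
open Matrix

section AuxStmt10

private lemma aux10_rank_comp {a b c : ℕ} (f : (Fin a → ℂ) →ₗ[ℂ] (Fin b → ℂ))
    (g : (Fin b → ℂ) →ₗ[ℂ] (Fin c → ℂ)) :
    Module.finrank ℂ (LinearMap.range (g.comp f)) +
      Module.finrank ℂ (LinearMap.range f ⊓ LinearMap.ker g : Submodule ℂ (Fin b → ℂ)) =
      Module.finrank ℂ (LinearMap.range f) := by
  have h := LinearMap.finrank_range_add_finrank_ker (g.domRestrict (LinearMap.range f))
  rw [LinearMap.range_domRestrict, LinearMap.ker_domRestrict] at h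
  rw [← LinearMap.range_comp] at h
  rw [← h]
  congr 1
  rw [← Submodule.finrank_map_subtype_eq (LinearMap.range f), Submodule.map_comap_subtype]

private lemma aux10_rank_neg {a b : ℕ} (B : Matrix (Fin a) (Fin b) ℂ) : (-B).rank = B.rank := by
  show Module.finrank ℂ (LinearMap.range (-B).mulVecLin) = _
  have h : LinearMap.range (-B).mulVecLin = LinearMap.range B.mulVecLin := by
    ext x
    constructor
    · rintro ⟨y, rfl⟩
      exact ⟨-y, by simp [mulVecLin_apply, neg_mulVec, mulVec_neg]⟩
    · rintro ⟨y, rfl⟩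
      exact ⟨-y, by simp [mulVecLin_apply, neg_mulVec, mulVec_neg]⟩
  rw [h]; rfl

private lemma aux10_inf_span_mem {a : ℕ} (O : Fin a → ℂ) (hO : O ≠ 0)
    (p : Submodule ℂ (Fin a → ℂ)) (h : O ∈ p) :
    Module.finrank ℂ (p ⊓ Submodule.span ℂ {O} : Submodule ℂ (Fin a → ℂ)) = 1 := by
  rw [inf_eq_right.2 (by rwa [Submodule.span_le, Set.singleton_subset_iff]),
    finrank_span_singleton hO]

private lemma aux10_inf_span_not_mem {a : ℕ} (O : Fin a → ℂ)
    (p : Submodule ℂ (Fin a → ℂ)) (h : O ∉ p) :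
    Module.finrank ℂ (p ⊓ Submodule.span ℂ {O} : Submodule ℂ (Fin a → ℂ)) = 0 := by
  have hb : p ⊓ Submodule.span ℂ {O} = ⊥ := by
    rw [Submodule.eq_bot_iff]
    rintro x ⟨hx1, hx2⟩
    obtain ⟨c, rfl⟩ := Submodule.mem_span_singleton.1 hx2
    rcases eq_or_ne c 0 with rfl | hc
    · simp
    · exact absurd (show O ∈ p by simpa [hc] using p.smul_mem c⁻¹ hx1) h
  simp [hb]

/-- The "dot with `O`" linear functional. -/
private noncomputable def aux10_phi {n : ℕ} (O : Fin n → ℂ) : (Fin n → ℂ) →ₗ[ℂ] ℂ where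
  toFun x := O ⬝ᵥ x
  map_add' x y := by simp [dotProduct_add]
  map_smul' c x := by simp [dotProduct_smul]

private lemma aux10_ker_Q {n : ℕ} (O : Fin n → ℂ) (hO : O ≠ 0)
    (Q : Matrix (Fin (n-1)) (Fin n) ℂ) (hQrank : Q.rank = n - 1) (hQO : Q.mulVec O = 0) :
    LinearMap.ker Q.mulVecLin = Submodule.span ℂ {O} := by
  have h := LinearMap.finrank_range_add_finrank_ker Q.mulVecLin
  rw [show Module.finrank ℂ (LinearMap.range Q.mulVecLin) = Q.rank from rfl, hQrank] at h
  simp [Module.finrank_pi] at h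
  have hO1 : O ≠ 0 := hO
  have hn1 : 1 ≤ n := by
    rcases Nat.eq_zero_or_pos n with rfl | h1
    · exact absurd (Subsingleton.elim O 0) hO
    · exact h1
  have hker : Module.finrank ℂ (LinearMap.ker Q.mulVecLin) = 1 := by omega
  refine (Submodule.eq_of_le_of_finrank_le ?_ ?_).symm
  · rw [Submodule.span_le, Set.singleton_subset_iff]
    exact hQO
  · rw [hker, finrank_span_singleton hO]

private lemma aux10_range_Qt {n : ℕ} (O : Fin n → ℂ) (hO : O ≠ 0)
    (Q : Matrix (Fin (n-1)) (Fin n) ℂ) (hQrank : Q.rank = n - 1) (hQO : Q.mulVec O = 0) :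
    LinearMap.range Qᵀ.mulVecLin = LinearMap.ker (aux10_phi O) := by
  have h := LinearMap.finrank_range_add_finrank_ker (aux10_phi O)
  have hsurj : Function.Surjective (aux10_phi O) := by
    obtain ⟨i, hi⟩ : ∃ i, O i ≠ 0 := by
      by_contra hc; push_neg at hc; exact hO (funext hc)
    intro c
    refine ⟨(c / O i) • (Pi.single i 1 : Fin n → ℂ), ?_⟩
    show O ⬝ᵥ _ = c
    rw [dotProduct_smul, dotProduct_single]
    simp [div_mul_cancel₀, hi]
  have hr1 : Module.finrank ℂ (LinearMap.range (aux10_phi O)) = 1 := by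
    rw [LinearMap.range_eq_top.2 hsurj, finrank_top, Module.finrank_self]
  rw [hr1, Module.finrank_pi] at h
  apply Submodule.eq_of_le_of_finrank_le
  · rintro x ⟨y, rfl⟩
    show O ⬝ᵥ Qᵀ *ᵥ y = 0
    rw [dotProduct_mulVec, vecMul_transpose, hQO]
    simp
  · have h2 : Module.finrank ℂ (LinearMap.range Qᵀ.mulVecLin) = Qᵀ.rank := rfl
    rw [h2, Matrix.rank_transpose, hQrank]
    simp at h
    omega

private lemma aux10_rank_Q_mul {n k : ℕ} (O : Fin n → ℂ) (hO : O ≠ 0)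
    (Q : Matrix (Fin (n-1)) (Fin n) ℂ) (hQrank : Q.rank = n - 1) (hQO : Q.mulVec O = 0)
    (B : Matrix (Fin n) (Fin k) ℂ) :
    (Q * B).rank +
      Module.finrank ℂ
        (LinearMap.range B.mulVecLin ⊓ Submodule.span ℂ {O} : Submodule ℂ (Fin n → ℂ)) =
      B.rank := by
  have h := aux10_rank_comp B.mulVecLin Q.mulVecLin
  rw [← Matrix.mulVecLin_mul, aux10_ker_Q O hO Q hQrank hQO] at h
  exact h

/-- The key pointwise statement. -/
private lemma aux10_key {r n : ℕ} (hr : 1 ≤ r)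
    (A : Matrix (Fin n) (Fin n) ℂ) (hskew : Aᵀ = -A) (hA : A.rank = 2*r)
    (O : Fin n → ℂ) (hO : O ≠ 0)
    (Q : Matrix (Fin (n-1)) (Fin n) ℂ) (hQrank : Q.rank = n - 1) (hQO : Q.mulVec O = 0) :
    (Q * A * Qᵀ).rank = 2*r ↔ O ∉ LinearMap.range (Matrix.mulVecLin A) := by
  have h1 := aux10_rank_Q_mul O hO Q hQrank hQO A
  have h4 := aux10_rank_Q_mul O hO Q hQrank hQO (A * Qᵀ)
  have h2 : (A * Qᵀ).rank = (Q * A).rank := by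
    rw [← Matrix.rank_transpose (A * Qᵀ), transpose_mul, transpose_transpose, hskew,
      Matrix.mul_neg, aux10_rank_neg]
  have hassoc : Q * A * Qᵀ = Q * (A * Qᵀ) := by rw [Matrix.mul_assoc]
  have h3 : O ∈ LinearMap.range (A * Qᵀ).mulVecLin ↔ O ∈ LinearMap.range A.mulVecLin := by
    constructor
    · rintro ⟨y, hy⟩
      refine ⟨Qᵀ *ᵥ y, ?_⟩
      rw [mulVecLin_apply] at hy ⊢
      rw [mulVec_mulVec]
      exact hy
    · rintro ⟨u, hu⟩
      rw [mulVecLin_apply] at hu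
      have hc0 : u ⬝ᵥ (A *ᵥ u) = 0 := by
        have h0 : u ⬝ᵥ (A *ᵥ u) = -(u ⬝ᵥ (A *ᵥ u)) := by
          conv_lhs => rw [dotProduct_mulVec, ← mulVec_transpose, hskew, neg_mulVec,
            neg_dotProduct, dotProduct_comm]
        linear_combination h0 / 2
      have hcu : O ⬝ᵥ u = 0 := by
        rw [← hu, dotProduct_comm]
        exact hc0
      have hmem : u ∈ LinearMap.range Qᵀ.mulVecLin := by
        rw [aux10_range_Qt O hO Q hQrank hQO]
        exact hcu
      obtain ⟨y, hy⟩ := hmem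
      refine ⟨y, ?_⟩
      rw [mulVecLin_apply, ← mulVec_mulVec]
      rw [mulVecLin_apply] at hy
      rw [hy, hu]
  by_cases hmem : O ∈ LinearMap.range (Matrix.mulVecLin A)
  · rw [aux10_inf_span_mem O hO _ hmem, hA] at h1
    rw [aux10_inf_span_mem O hO _ (h3.2 hmem), h2] at h4
    simp only [hmem, not_true_eq_false, iff_false]
    rw [hassoc]
    omega
  · rw [aux10_inf_span_not_mem O _ hmem, hA] at h1
    rw [aux10_inf_span_not_mem O _ (fun h => hmem (h3.1 h)), h2] at h4
    simp only [hmem, not_false_eq_true, iff_true]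
    rw [hassoc]
    omega

end AuxStmt10

/-- Projecting a constant-rank space of skew-symmetric matrices from a
point `O` keeps the rank constant iff `O` lies outside the column spaces of all nonzero
elements of the space. -/
theorem stmt_10 (r n : ℕ) (hr : 1 ≤ r) (hn : 2 ≤ n)
    (M : Submodule ℂ (Matrix (Fin n) (Fin n) ℂ))
    (hskew : ∀ A ∈ M, Aᵀ = -A)
    (hrank : ∀ A ∈ M, A ≠ 0 → A.rank = 2*r)
    (O : Fin n → ℂ) (hO : O ≠ 0)
    (Q : Matrix (Fin (n-1)) (Fin n) ℂ) (hQrank : Q.rank = n - 1) (hQO : Q.mulVec O = 0)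
    (hnotinM : ∀ A ∈ M, A ≠ 0 → ∀ v : Fin n → ℂ,
      A ≠ Matrix.vecMulVec O v - Matrix.vecMulVec v O) :
    (∀ A ∈ M, A ≠ 0 → (Q * A * Qᵀ).rank = 2*r) ↔
    (∀ A ∈ M, A ≠ 0 → O ∉ LinearMap.range (Matrix.mulVecLin A)) := by
  constructor
  · intro h A hA hAne
    exact (aux10_key hr A (hskew A hA) (hrank A hA hAne) O hO Q hQrank hQO).1 (h A hA hAne)
  · intro h A hA hAne
    exact (aux10_key hr A (hskew A hA) (hrank A hA hAne) O hO Q hQrank hQO).2 (h A hA hAne)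
end

section
/- Let n ≥ 2 and let M be a linear subspace of the space of skew-symmetric n×n complex matrices such that every nonzero matrix in M has rank 2. Then at least one of the following holds: (i) there exists a 3-dimensional subspace W ⊆ ℂⁿ such that the column space of every A ∈ M is contained in W; or (ii) there exists a nonzero vector w ∈ ℂⁿ such that every A ∈ M can be written as A = w vᵀ − v wᵀ for some v ∈ ℂⁿ. -/
/-!
A nonzero skew-symmetric matrix of rank 2 is a decomposable bivector `w ∧ v`, and any nonzero `w`
in its column space can serve as the first factor. If two members of `M` had column spaces meeting
only in `0`, their sum would be `x ∧ y + u ∧ t` with `x, y, u, t` independent, which has rank 4;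
so the column planes of the nonzero members of `M` pairwise meet.

Pairwise meeting planes either share a line or lie in a common 3-space. If no nonzero vector lies
in all of them, pick planes `P ≠ Q`; they meet in a line `L`, and every other plane contains `L` or
lies in `P + Q`. Some plane `D` misses `L`, so `D ⊆ P + Q`. A plane `R ⊇ L` not inside `P + Q`
would meet `P + Q` only in `L`, so `D ∩ R ⊆ L`, forcing `L ⊆ D`. Hence all planes lie in `P + Q`.
-/

open Matrix Module Submodule

section Planes

variable {K V : Type*} [Field K] [AddCommGroup V] [Module K V] [FiniteDimensional K V]

theorem Submodule.le_of_finrank_eq_one_of_inf_ne_bot {L X : Submodule K V}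
    (hL : finrank K L = 1) (hLX : L ⊓ X ≠ ⊥) : L ≤ X := by
  have hpos : 0 < finrank K ↥(L ⊓ X) := Submodule.one_le_finrank_iff.mpr hLX
  have : L ⊓ X = L := eq_of_le_of_finrank_le inf_le_left (by omega)
  exact this ▸ inf_le_right

theorem Submodule.le_sup_of_finrank_eq_two {R X Y : Submodule K V} (hR : finrank K R = 2)
    (hX : R ⊓ X ≠ ⊥) (hY : R ⊓ Y ≠ ⊥) (hXY : R ⊓ (X ⊓ Y) = ⊥) : R ≤ X ⊔ Y := by
  have hdisj : (R ⊓ X) ⊓ (R ⊓ Y) = ⊥ := by rw [inf_inf_inf_comm, inf_idem, hXY]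
  have hsum := finrank_sup_add_finrank_inf_eq (R ⊓ X) (R ⊓ Y)
  rw [hdisj, finrank_bot] at hsum
  have hX' := Submodule.one_le_finrank_iff.mpr hX
  have hY' := Submodule.one_le_finrank_iff.mpr hY
  have hR' : R ⊓ X ⊔ R ⊓ Y = R :=
    eq_of_le_of_finrank_le (sup_le inf_le_left inf_le_left) (by omega)
  calc R = R ⊓ X ⊔ R ⊓ Y := hR'.symm
    _ ≤ X ⊔ Y := sup_le_sup inf_le_right inf_le_right

variable {P Q : Submodule K V}

theorem Submodule.finrank_inf_eq_one_of_finrank_eq_two (hP : finrank K P = 2)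
    (hQ : finrank K Q = 2) (hPQ : P ≠ Q) (hmeet : P ⊓ Q ≠ ⊥) : finrank K ↥(P ⊓ Q) = 1 := by
  have hlt : P ⊓ Q < P := inf_le_left.lt_of_ne fun h => hPQ <|
    eq_of_le_of_finrank_eq (h ▸ inf_le_right) (by rw [hP, hQ])
  have := Submodule.finrank_lt_finrank_of_lt hlt
  have := Submodule.one_le_finrank_iff.mpr hmeet
  omega

theorem Submodule.le_sup_or_inf_le_of_finrank_eq_two {R : Submodule K V} (hR : finrank K R = 2)
    (hL : finrank K ↥(P ⊓ Q) = 1) (hRP : R ⊓ P ≠ ⊥) (hRQ : R ⊓ Q ≠ ⊥) :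
    R ≤ P ⊔ Q ∨ P ⊓ Q ≤ R := by
  by_cases h : R ⊓ (P ⊓ Q) = ⊥
  · exact .inl (le_sup_of_finrank_eq_two hR hRP hRQ h)
  · exact .inr (le_of_finrank_eq_one_of_inf_ne_bot hL (by rwa [inf_comm]))

theorem Submodule.exists_forall_mem_or_exists_finrank_eq_three_forall_le [Nontrivial V]
    (S : Set (Submodule K V)) (hS : ∀ P ∈ S, finrank K P = 2)
    (hmeet : ∀ P ∈ S, ∀ Q ∈ S, P ⊓ Q ≠ ⊥) :
    (∃ p : V, p ≠ 0 ∧ ∀ P ∈ S, p ∈ P) ∨ ∃ W : Submodule K V, finrank K W = 3 ∧ ∀ P ∈ S, P ≤ W := by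
  refine or_iff_not_imp_left.mpr fun hno => ?_
  push Not at hno
  obtain ⟨v, hv⟩ := exists_ne (0 : V)
  obtain ⟨P, hP, -⟩ := hno v hv
  obtain ⟨x, hxP, hx0⟩ := (Submodule.ne_bot_iff P).mp (by simpa using hmeet P hP P hP)
  obtain ⟨Q, hQ, hxQ⟩ := hno x hx0
  have hL : finrank K ↥(P ⊓ Q) = 1 :=
    finrank_inf_eq_one_of_finrank_eq_two (hS P hP) (hS Q hQ) (by rintro rfl; exact hxQ hxP)
      (hmeet P hP Q hQ)
  have hW : finrank K ↥(P ⊔ Q) = 3 := by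
    have := finrank_sup_add_finrank_inf_eq P Q
    rw [hS P hP, hS Q hQ] at this
    omega
  have key : ∀ R ∈ S, R ≤ P ⊔ Q ∨ P ⊓ Q ≤ R := fun R hR =>
    le_sup_or_inf_le_of_finrank_eq_two (hS R hR) hL (hmeet R hR P hP) (hmeet R hR Q hQ)
  refine ⟨P ⊔ Q, hW, fun R hR => (key R hR).elim id fun hLR => ?_⟩
  by_contra hRW
  have hRW' : R ⊓ (P ⊔ Q) = P ⊓ Q := by
    have hlt := Submodule.finrank_lt_finrank_of_lt
      (inf_le_left.lt_of_ne fun h => hRW (inf_eq_left.mp h))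
    exact (eq_of_le_of_finrank_le (le_inf hLR (inf_le_left.trans le_sup_left))
      (by rw [hS R hR] at hlt; omega)).symm
  obtain ⟨p, hpL, hp0⟩ := (Submodule.ne_bot_iff _).mp (hmeet P hP Q hQ)
  obtain ⟨D, hD, hpD⟩ := hno p hp0
  have hDW : D ≤ P ⊔ Q := (key D hD).resolve_right fun h => hpD (h hpL)
  have hLD : P ⊓ Q ⊓ D ≠ ⊥ := by
    refine ne_bot_of_le_ne_bot (hmeet R hR D hD) ?_
    rw [← hRW']
    exact le_inf (inf_le_inf_left R hDW) inf_le_right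
  exact hpD (le_of_finrank_eq_one_of_inf_ne_bot hL hLD hpL)

end Planes

section SkewMatrices

variable {K ι : Type*} [Field K] [Fintype ι]

def Matrix.wedge (x y : ι → K) : Matrix ι ι K := vecMulVec x y - vecMulVec y x

theorem Matrix.wedge_mulVec (x y z : ι → K) :
    wedge x y *ᵥ z = (y ⬝ᵥ z) • x - (x ⬝ᵥ z) • y := by
  simp [wedge, sub_mulVec, vecMulVec_mulVec]

theorem Matrix.range_wedge_le (x y : ι → K) :
    LinearMap.range (wedge x y).mulVecLin ≤ span K {x, y} := by
  rintro _ ⟨z, rfl⟩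
  rw [mulVecLin_apply, wedge_mulVec, sub_eq_add_neg, ← neg_smul]
  exact mem_span_pair.mpr ⟨_, _, rfl⟩

theorem Matrix.dotProduct_mulVec_of_transpose_eq_neg {A : Matrix ι ι K} (hA : Aᵀ = -A)
    (x y : ι → K) : x ⬝ᵥ A *ᵥ y = -(A *ᵥ x ⬝ᵥ y) := by
  rw [dotProduct_mulVec, ← mulVec_transpose, hA, neg_mulVec, neg_dotProduct]

theorem Matrix.dotProduct_mulVec_self_of_transpose_eq_neg_s12 [NeZero (2 : K)] {A : Matrix ι ι K}
    (hA : Aᵀ = -A) (x : ι → K) : x ⬝ᵥ A *ᵥ x = 0 := by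
  have h := dotProduct_mulVec_of_transpose_eq_neg hA x x
  rw [dotProduct_comm (A *ᵥ x)] at h
  have : (2 : K) * (x ⬝ᵥ A *ᵥ x) = 0 := by linear_combination h
  exact (mul_eq_zero.mp this).resolve_left two_ne_zero

theorem exists_dotProduct_eq_of_linearIndependent {κ : Type*} [Fintype κ] {v : κ → ι → K}
    (hv : LinearIndependent K v) (c : κ → K) : ∃ z : ι → K, ∀ i, v i ⬝ᵥ z = c i := by
  have hrange : LinearMap.range (of v).mulVecLin = ⊤ :=
    eq_top_of_finrank_eq <|
      (LinearIndependent.rank_matrix (M := of v) hv).trans (finrank_fintype_fun_eq_card K).symm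
  obtain ⟨z, hz⟩ := hrange ▸ mem_top (x := c)
  exact ⟨z, fun i => congrFun hz i⟩

theorem Matrix.span_le_range_wedge_add_wedge {x y u t : ι → K}
    (h : LinearIndependent K ![x, y, u, t]) :
    span K (Set.range ![x, y, u, t]) ≤ LinearMap.range (wedge x y + wedge u t).mulVecLin := by
  intro r hr
  obtain ⟨c, rfl⟩ := (mem_span_range_iff_exists_fun K).mp hr
  obtain ⟨z, hz⟩ := exists_dotProduct_eq_of_linearIndependent h ![-c 1, c 0, -c 3, c 2]
  refine ⟨z, ?_⟩
  have h0 := hz 0; have h1 := hz 1; have h2 := hz 2; have h3 := hz 3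
  simp only [Fin.isValue, cons_val] at h0 h1 h2 h3
  simp only [mulVecLin_apply, add_mulVec, wedge_mulVec, h0, h1, h2, h3, Fin.sum_univ_four,
    cons_val]
  module

theorem Matrix.four_le_rank_wedge_add_wedge {x y u t : ι → K}
    (h : LinearIndependent K ![x, y, u, t]) : 4 ≤ (wedge x y + wedge u t).rank := by
  have := Submodule.finrank_mono (span_le_range_wedge_add_wedge h)
  rwa [finrank_span_eq_card h, Fintype.card_fin] at this

theorem Matrix.exists_eq_wedge_of_transpose_eq_neg [NeZero (2 : K)] {A : Matrix ι ι K}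
    (hA : Aᵀ = -A) (hr : A.rank = 2) {w : ι → K} (hw : w ∈ LinearMap.range A.mulVecLin)
    (hw0 : w ≠ 0) : ∃ v, A = wedge w v := by
  obtain ⟨u₁, hu₁ : A *ᵥ u₁ = w⟩ := hw
  obtain ⟨u₂, hu₂⟩ := exists_dotProduct_eq_of_linearIndependent
    (linearIndependent_unique_iff.mpr hw0 : LinearIndependent K fun _ : Unit => w) fun _ => 1
  replace hu₂ : w ⬝ᵥ u₂ = 1 := hu₂ ()
  set v := -(A *ᵥ u₂) with hv
  -- `u₁, u₂` pair with `w, v` as a dual basis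
  have h₁ (z) : u₁ ⬝ᵥ A *ᵥ z = -(w ⬝ᵥ z) := by
    rw [dotProduct_mulVec_of_transpose_eq_neg hA, hu₁]
  have h₂ (z) : u₂ ⬝ᵥ A *ᵥ z = v ⬝ᵥ z := by
    rw [dotProduct_mulVec_of_transpose_eq_neg hA, hv, neg_dotProduct]
  have h₁w : u₁ ⬝ᵥ w = 0 := hu₁ ▸ dotProduct_mulVec_self_of_transpose_eq_neg_s12 hA u₁
  have h₁v : u₁ ⬝ᵥ v = 1 := by rw [hv, dotProduct_neg, h₁, hu₂, neg_neg]
  have h₂w : u₂ ⬝ᵥ w = 1 := by rw [dotProduct_comm, hu₂]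
  have h₂v : u₂ ⬝ᵥ v = 0 := by
    rw [hv, dotProduct_neg, dotProduct_mulVec_self_of_transpose_eq_neg_s12 hA, neg_zero]
  have coords (s t : K) : u₂ ⬝ᵥ (s • w + t • v) = s ∧ u₁ ⬝ᵥ (s • w + t • v) = t := by
    simp [dotProduct_add, dotProduct_smul, h₁w, h₁v, h₂w, h₂v]
  have hind : LinearIndependent K ![w, v] := LinearIndependent.pair_iff.mpr fun s t hst => by
    obtain ⟨hs, ht⟩ := coords s t
    rw [hst, dotProduct_zero] at hs ht
    exact ⟨hs.symm, ht.symm⟩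
  have hspan : span K {w, v} = LinearMap.range A.mulVecLin := by
    refine eq_of_le_of_finrank_eq (span_le.mpr ?_) ?_
    · rintro _ (rfl | rfl)
      exacts [⟨u₁, hu₁⟩, ⟨-u₂, by rw [mulVecLin_apply, mulVec_neg]⟩]
    · rw [← Matrix.rank, hr, ← range_cons_cons_empty w v ![], finrank_span_eq_card hind,
        Fintype.card_fin]
  refine ⟨v, ext_iff_mulVec.mpr fun z => ?_⟩
  obtain ⟨s, t, hst⟩ := mem_span_pair.mp (hspan ▸ LinearMap.mem_range_self A.mulVecLin z)
  obtain ⟨hs, ht⟩ := coords s t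
  rw [mulVecLin_apply] at hst
  rw [hst, h₂] at hs
  rw [hst, h₁] at ht
  rw [wedge_mulVec, ← hst, hs, ← ht, neg_smul, sub_eq_add_neg]

theorem Matrix.linearIndependent_of_range_wedge_inf_eq_bot {x y u t : ι → K}
    (hxy : (wedge x y).rank = 2) (hut : (wedge u t).rank = 2)
    (h : LinearMap.range (wedge x y).mulVecLin ⊓ LinearMap.range (wedge u t).mulVecLin = ⊥) :
    LinearIndependent K ![x, y, u, t] := by
  rw [linearIndependent_iff_card_eq_finrank_span]
  refine le_antisymm ?_ (finrank_range_le_card _)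
  have hsum := finrank_sup_add_finrank_inf_eq (LinearMap.range (wedge x y).mulVecLin)
    (LinearMap.range (wedge u t).mulVecLin)
  rw [h, finrank_bot, ← Matrix.rank, ← Matrix.rank, hxy, hut] at hsum
  have hle : LinearMap.range (wedge x y).mulVecLin ⊔ LinearMap.range (wedge u t).mulVecLin ≤
      span K (Set.range ![x, y, u, t]) :=
    sup_le ((range_wedge_le x y).trans (span_mono (by simp [Set.insert_subset_iff])))
      ((range_wedge_le u t).trans (span_mono (by simp [Set.insert_subset_iff])))
  have := Submodule.finrank_mono hle
  simp only [Fintype.card_fin, Set.finrank]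
  omega

theorem Matrix.exists_eq_wedge_of_transpose_eq_neg_of_rank_eq_two [NeZero (2 : K)]
    {A : Matrix ι ι K} (hA : Aᵀ = -A) (hr : A.rank = 2) : ∃ x y, A = wedge x y := by
  obtain ⟨x, hx, hx0⟩ := (Submodule.ne_bot_iff (LinearMap.range A.mulVecLin)).mp fun h => by
    rw [Matrix.rank, h, finrank_bot] at hr
    omega
  exact ⟨x, exists_eq_wedge_of_transpose_eq_neg hA hr hx hx0⟩

theorem Matrix.four_le_rank_add_of_range_inf_eq_bot [NeZero (2 : K)] {A B : Matrix ι ι K}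
    (hA : Aᵀ = -A) (hB : Bᵀ = -B) (hrA : A.rank = 2) (hrB : B.rank = 2)
    (h : LinearMap.range A.mulVecLin ⊓ LinearMap.range B.mulVecLin = ⊥) : 4 ≤ (A + B).rank := by
  obtain ⟨x, y, rfl⟩ := exists_eq_wedge_of_transpose_eq_neg_of_rank_eq_two hA hrA
  obtain ⟨u, t, rfl⟩ := exists_eq_wedge_of_transpose_eq_neg_of_rank_eq_two hB hrB
  exact four_le_rank_wedge_add_wedge (linearIndependent_of_range_wedge_inf_eq_bot hrA hrB h)

theorem Matrix.range_inf_range_ne_bot_of_forall_rank_eq_two [NeZero (2 : K)]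
    {M : Submodule K (Matrix ι ι K)} (hskew : ∀ A ∈ M, Aᵀ = -A)
    (hrank : ∀ A ∈ M, A ≠ 0 → A.rank = 2) {A B : Matrix ι ι K} (hA : A ∈ M) (hB : B ∈ M)
    (hA0 : A ≠ 0) (hB0 : B ≠ 0) :
    LinearMap.range A.mulVecLin ⊓ LinearMap.range B.mulVecLin ≠ ⊥ := fun h => by
  have h4 := four_le_rank_add_of_range_inf_eq_bot (hskew A hA) (hskew B hB) (hrank A hA hA0)
    (hrank B hB hB0) h
  have hAB : A + B ≠ 0 := fun hAB => by rw [hAB, rank_zero] at h4; omega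
  have := hrank _ (M.add_mem hA hB) hAB
  omega

end SkewMatrices

/-- A linear space of skew-symmetric complex matrices of constant rank 2
consists either of matrices whose column spaces lie in a fixed 3-dimensional subspace
(lines in a fixed plane) or of matrices of the form `w vᵀ − v wᵀ` for a fixed `w`
(lines through a fixed point). -/
theorem stmt_12 (n : ℕ) (hn : 2 ≤ n)
    (M : Submodule ℂ (Matrix (Fin n) (Fin n) ℂ))
    (hskew : ∀ A ∈ M, Aᵀ = -A)
    (hrank : ∀ A ∈ M, A ≠ 0 → A.rank = 2) :
    (∃ W : Submodule ℂ (Fin n → ℂ), Module.finrank ℂ W = 3 ∧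
      ∀ A ∈ M, LinearMap.range (Matrix.mulVecLin A) ≤ W) ∨
    (∃ w : Fin n → ℂ, w ≠ 0 ∧
      ∀ A ∈ M, ∃ v : Fin n → ℂ, A = Matrix.vecMulVec w v - Matrix.vecMulVec v w) := by
  have : NeZero n := ⟨by omega⟩
  rcases exists_forall_mem_or_exists_finrank_eq_three_forall_le
      {R | ∃ A ∈ M, A ≠ 0 ∧ LinearMap.range A.mulVecLin = R}
      (by rintro _ ⟨A, hA, hA0, rfl⟩; exact hrank A hA hA0)
      (by rintro _ ⟨A, hA, hA0, rfl⟩ _ ⟨B, hB, hB0, rfl⟩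
          exact range_inf_range_ne_bot_of_forall_rank_eq_two hskew hrank hA hB hA0 hB0)
    with ⟨p, hp0, hp⟩ | ⟨W, hW, hle⟩
  · refine .inr ⟨p, hp0, fun A hA => ?_⟩
    rcases eq_or_ne A 0 with rfl | hA0
    · exact ⟨0, by simp⟩
    · exact exists_eq_wedge_of_transpose_eq_neg (hskew A hA) (hrank A hA hA0)
        (hp _ ⟨A, hA, hA0, rfl⟩) hp0
  · refine .inl ⟨W, hW, fun A hA => ?_⟩
    rcases eq_or_ne A 0 with rfl | hA0
    · simp
    · exact hle _ ⟨A, hA, hA0, rfl⟩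
end

section
/- For (a,b,c) ∈ ℂ³, let A(a,b,c) be the 5×5 complex skew-symmetric matrix (indices 0–4) whose strictly upper-triangular entries are A₀₃ = a, A₀₄ = b, A₁₂ = a, A₁₃ = b, A₁₄ = c, A₂₃ = c, with all other strictly upper-triangular entries equal to 0 and A_{j,i} = −A_{i,j}. Then for every (a,b,c) ≠ (0,0,0) the matrix A(a,b,c) has rank exactly 4. In particular the span of A(1,0,0), A(0,1,0), A(0,0,1) is a 3-dimensional space of skew-symmetric 5×5 matrices of constant rank 4. -/
open Matrix

/-- The strictly upper-triangular part of the matrix of Statement 15: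
`A₀₃ = a, A₀₄ = b, A₁₂ = a, A₁₃ = b, A₁₄ = c, A₂₃ = c`. -/
def upperPart (a b c : ℂ) : Matrix (Fin 5) (Fin 5) ℂ :=
  Matrix.of !![0, 0, 0, a, b;
               0, 0, a, b, c;
               0, 0, 0, c, 0;
               0, 0, 0, 0, 0;
               0, 0, 0, 0, 0]

/-- The skew-symmetric matrix `A(a,b,c)` of Statement 15. -/
def skewA (a b c : ℂ) : Matrix (Fin 5) (Fin 5) ℂ :=
  upperPart a b c - (upperPart a b c)ᵀ

/-!
A skew-symmetric matrix of odd size is singular, since `det A = det Aᵀ = (-1)⁵ det A`; hence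
`rank A(a,b,c) ≤ 4`. Conversely, the principal `4 × 4` minors of `A(a,b,c)` on the indices
`{0,1,2,3}`, `{1,2,3,4}` and `{0,1,3,4}` are the squares of their Pfaffians `a²`, `c²` and
`b² - ac`, which vanish together only at `a = b = c = 0`. As `A(a,b,c)` is linear in `(a,b,c)`
and vanishes only at the origin, the span of the three basis matrices consists exactly of the
`A(a,b,c)` and is `3`-dimensional.
-/

namespace Matrix

variable {n R : Type*} [Fintype n]

theorem det_eq_zero_of_transpose_eq_neg [DecidableEq n] [CommRing R] [NoZeroDivisors R]
    [CharZero R] {A : Matrix n n R} (hA : Aᵀ = -A) (hn : Odd (Fintype.card n)) : A.det = 0 := by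
  have h : A.det = -A.det := calc
    A.det = Aᵀ.det := A.det_transpose.symm
    _ = -A.det := by rw [hA, det_neg, hn.neg_one_pow, neg_one_mul]
  exact CharZero.eq_neg_self_iff.mp h

theorem det_ne_zero_of_rank_eq_card [DecidableEq n] {K : Type*} [Field K] {A : Matrix n n K}
    (hA : A.rank = Fintype.card n) : A.det ≠ 0 := by
  have hrange : LinearMap.range A.mulVecLin = ⊤ :=
    Submodule.eq_top_of_finrank_eq (by rw [← rank, hA, Module.finrank_fintype_fun_eq_card])
  have hsurj : Function.Surjective A.mulVec := LinearMap.range_eq_top.mp hrange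
  exact ((isUnit_iff_isUnit_det A).mp (mulVec_surjective_iff_isUnit.mp hsurj)).ne_zero

theorem rank_lt_card_of_transpose_eq_neg [DecidableEq n] {K : Type*} [Field K] [CharZero K]
    {A : Matrix n n K} (hA : Aᵀ = -A) (hn : Odd (Fintype.card n)) : A.rank < Fintype.card n :=
  A.rank_le_card_width.lt_of_ne fun h ↦
    det_ne_zero_of_rank_eq_card h (det_eq_zero_of_transpose_eq_neg hA hn)

theorem card_le_rank_of_det_submatrix_ne_zero {m k : Type*} [Fintype k] [DecidableEq k]
    [CommRing R] [IsDomain R] (A : Matrix m n R) (r : k → m) (c : k → n)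
    (h : (A.submatrix r c).det ≠ 0) : Fintype.card k ≤ A.rank :=
  rank_of_det_ne_zero h ▸ A.rank_submatrix_le r c

theorem det_fin_four_skew [CommRing R] (p q r s t u : R) :
    !![0, p, q, r; -p, 0, s, t; -q, -s, 0, u; -r, -t, -u, 0].det =
      (p * u - q * t + r * s) ^ 2 := by
  rw [det_succ_row_zero]
  simp [Fin.sum_univ_succ, det_fin_three, Fin.succAbove_of_castSucc_lt, Fin.succAbove_of_lt_succ]
  ring

end Matrix

lemma skewA_eq (a b c : ℂ) : skewA a b c =
    !![0, 0, 0, a, b; 0, 0, a, b, c; 0, -a, 0, c, 0; -a, -b, -c, 0, 0; -b, -c, 0, 0, 0] := by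
  have h : upperPart a b c =
      !![0, 0, 0, a, b; 0, 0, a, b, c; 0, 0, 0, c, 0; 0, 0, 0, 0, 0; 0, 0, 0, 0, 0] := rfl
  rw [skewA, h]
  ext i j
  fin_cases i <;> fin_cases j <;> simp

lemma skewA_transpose (a b c : ℂ) : (skewA a b c)ᵀ = -skewA a b c := by
  rw [skewA, transpose_sub, transpose_transpose, neg_sub]

lemma skewA_eq_sum (a b c : ℂ) :
    skewA a b c = a • skewA 1 0 0 + b • skewA 0 1 0 + c • skewA 0 0 1 := by
  simp only [skewA_eq]
  ext i j
  fin_cases i <;> fin_cases j <;> simp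

lemma skewA_eq_zero_iff {a b c : ℂ} : skewA a b c = 0 ↔ (a, b, c) = (0, 0, 0) := by
  rw [skewA_eq, ← Matrix.ext_iff]
  constructor
  · intro h
    have h03 := h 0 3
    have h04 := h 0 4
    have h14 := h 1 4
    simp_all
  · simp only [Prod.mk.injEq]
    rintro ⟨rfl, rfl, rfl⟩ i j
    fin_cases i <;> fin_cases j <;> simp

lemma det_skewA_submatrix_0123 (a b c : ℂ) :
    ((skewA a b c).submatrix ![0, 1, 2, 3] ![0, 1, 2, 3]).det = (a ^ 2) ^ 2 := by
  have h : (skewA a b c).submatrix ![0, 1, 2, 3] ![0, 1, 2, 3] =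
      !![0, 0, 0, a; -0, 0, a, b; -0, -a, 0, c; -a, -b, -c, 0] := by
    rw [skewA_eq]; ext i j; fin_cases i <;> fin_cases j <;> simp
  rw [h, det_fin_four_skew]
  ring

lemma det_skewA_submatrix_1234 (a b c : ℂ) :
    ((skewA a b c).submatrix ![1, 2, 3, 4] ![1, 2, 3, 4]).det = (c ^ 2) ^ 2 := by
  have h : (skewA a b c).submatrix ![1, 2, 3, 4] ![1, 2, 3, 4] =
      !![0, a, b, c; -a, 0, c, 0; -b, -c, 0, 0; -c, -0, -0, 0] := by
    rw [skewA_eq]; ext i j; fin_cases i <;> fin_cases j <;> simp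
  rw [h, det_fin_four_skew]
  ring

lemma det_skewA_submatrix_0134 (a b c : ℂ) :
    ((skewA a b c).submatrix ![0, 1, 3, 4] ![0, 1, 3, 4]).det = (b ^ 2 - a * c) ^ 2 := by
  have h : (skewA a b c).submatrix ![0, 1, 3, 4] ![0, 1, 3, 4] =
      !![0, 0, a, b; -0, 0, b, c; -a, -b, 0, 0; -b, -c, -0, 0] := by
    rw [skewA_eq]; ext i j; fin_cases i <;> fin_cases j <;> simp
  rw [h, det_fin_four_skew]
  ring

theorem rank_skewA {a b c : ℂ} (h : (a, b, c) ≠ (0, 0, 0)) : (skewA a b c).rank = 4 := by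
  have hle : (skewA a b c).rank < 5 := by
    simpa using rank_lt_card_of_transpose_eq_neg (skewA_transpose a b c) (by decide)
  refine le_antisymm (Nat.le_of_lt_succ hle) ?_
  by_cases ha : a = 0
  · by_cases hc : c = 0
    · have hb : b ≠ 0 := by rintro rfl; exact h (by rw [ha, hc])
      simpa using card_le_rank_of_det_submatrix_ne_zero _ _ _
        ((det_skewA_submatrix_0134 a b c).trans_ne (by simp [ha, hc, hb]))
    · simpa using card_le_rank_of_det_submatrix_ne_zero _ _ _
        ((det_skewA_submatrix_1234 a b c).trans_ne (by simpa))
  · simpa using card_le_rank_of_det_submatrix_ne_zero _ _ _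
      ((det_skewA_submatrix_0123 a b c).trans_ne (by simpa))

lemma mem_span_skewA_iff {A : Matrix (Fin 5) (Fin 5) ℂ} :
    A ∈ Submodule.span ℂ {skewA 1 0 0, skewA 0 1 0, skewA 0 0 1} ↔
      ∃ a b c, skewA a b c = A := by
  simp only [Submodule.mem_span_triple, ← skewA_eq_sum]

lemma linearIndependent_skewA :
    LinearIndependent ℂ ![skewA 1 0 0, skewA 0 1 0, skewA 0 0 1] := by
  rw [Fintype.linearIndependent_iff]
  intro g hg
  simp only [Fin.sum_univ_three, cons_val_zero, cons_val_one, cons_val_two, head_cons,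
    tail_cons, ← skewA_eq_sum, skewA_eq_zero_iff, Prod.mk.injEq] at hg
  intro i
  fin_cases i <;> simp [hg]

lemma finrank_span_skewA :
    Module.finrank ℂ (Submodule.span ℂ
      ({skewA 1 0 0, skewA 0 1 0, skewA 0 0 1} : Set (Matrix (Fin 5) (Fin 5) ℂ))) = 3 := by
  have h := finrank_span_eq_card linearIndependent_skewA
  rwa [range_cons, range_cons_cons_empty, Set.singleton_union, Fintype.card_fin] at h

/-- The matrix `A(a,b,c)` has rank exactly 4 for `(a,b,c) ≠ (0,0,0)`;
in particular the span of `A(1,0,0), A(0,1,0), A(0,0,1)` is a 3-dimensional space of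
skew-symmetric `5×5` complex matrices of constant rank 4. -/
theorem stmt_15 :
    (∀ a b c : ℂ, (a, b, c) ≠ (0, 0, 0) → (skewA a b c).rank = 4) ∧
    Module.finrank ℂ (Submodule.span ℂ
      ({skewA 1 0 0, skewA 0 1 0, skewA 0 0 1} : Set (Matrix (Fin 5) (Fin 5) ℂ))) = 3 ∧
    (∀ A ∈ Submodule.span ℂ
      ({skewA 1 0 0, skewA 0 1 0, skewA 0 0 1} : Set (Matrix (Fin 5) (Fin 5) ℂ)),
      Aᵀ = -A) ∧
    (∀ A ∈ Submodule.span ℂ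
      ({skewA 1 0 0, skewA 0 1 0, skewA 0 0 1} : Set (Matrix (Fin 5) (Fin 5) ℂ)),
      A ≠ 0 → A.rank = 4) := by
  refine ⟨fun a b c ↦ rank_skewA, finrank_span_skewA, ?_, ?_⟩
  · rintro A hA
    obtain ⟨a, b, c, rfl⟩ := mem_span_skewA_iff.mp hA
    exact skewA_transpose a b c
  · rintro A hA hA0
    obtain ⟨a, b, c, rfl⟩ := mem_span_skewA_iff.mp hA
    exact rank_skewA (mt skewA_eq_zero_iff.mpr hA0)
end
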